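/- arXiv:0809.1228 — 5 statements merged into one kernel-verified Lean document; each statement's English description precedes it below -/
import Mathlib

section
/- Let f : R → S be a flat homomorphism of commutative rings, let a be an ideal of R and let M be an R-module. Then K.grade_R(a, M) ≤ K.grade_S(aS, M ⊗_R S). -/
/-!
Background definitions for non-Noetherian Cohen-Macaulayness
(Koszul grade, heights, weakly associated primes, etc.),
following Asgharzadeh–Tousi, "On the notion of Cohen-Macaulayness
for non Noetherian rings".
-/

noncomputable section
namespace NNCM

universe u

section Koszul

variable {R : Type*} [CommRing R]

/-- The differential of the Koszul cochain complex `Hom_R(K_•(x₁,…,xₙ), M)`, where the module of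
`i`-cochains is realized as functions on strictly increasing `i`-tuples in `Fin n`
(corresponding to the standard basis of the `i`-th exterior power of `Rⁿ`). -/
def koszulD {n : ℕ} (x : Fin n → R) (M : Type*) [AddCommGroup M] [Module R M] (i : ℕ) :
    ((Fin i ↪o Fin n) → M) →ₗ[R] ((Fin (i + 1) ↪o Fin n) → M) where
  toFun f s := ∑ k : Fin (i + 1),
    ((-1 : ℤ) ^ (k : ℕ)) • x (s k) • f ((Fin.succAboveOrderEmb k).trans s)
  map_add' f g := by
    funext s
    simp [smul_add, Finset.sum_add_distrib]
  map_smul' c f := by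
    funext s
    rw [RingHom.id_apply]
    simp only [Pi.smul_apply, Finset.smul_sum]
    refine Finset.sum_congr rfl fun k _ => ?_
    rw [smul_comm c, smul_comm c]

/-- `koszulHNonzero x M i` says that the `i`-th Koszul cohomology
`H^i(Hom_R(K_•(x), M))` is nonzero, i.e. there is an `i`-cocycle which is not an
`i`-coboundary. -/
def koszulHNonzero {n : ℕ} (x : Fin n → R) (M : Type*) [AddCommGroup M] [Module R M] :
    ℕ → Prop
  | 0 => LinearMap.ker (koszulD x M 0) ≠ ⊥
  | (j + 1) => ¬ LinearMap.ker (koszulD x M (j + 1)) ≤ LinearMap.range (koszulD x M j)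

/-- The Koszul grade of a finite sequence `x` on `M`:
`inf { i | H^i(Hom_R(K_•(x), M)) ≠ 0 }` (with `inf ∅ = +∞`). -/
def kgradeSeq {n : ℕ} (x : Fin n → R) (M : Type*) [AddCommGroup M] [Module R M] : ℕ∞ :=
  ⨅ (i : ℕ) (_ : koszulHNonzero x M i), (i : ℕ∞)

/-- The Koszul grade of an arbitrary ideal `a` on `M`: the supremum, over all finite sequences of
elements of `a` (equivalently, over all finitely generated subideals of `a`), of the Koszul
grade of the sequence on `M`. For a finitely generated ideal this agrees with the Koszul grade
computed from any finite generating set. -/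
def kgrade (a : Ideal R) (M : Type*) [AddCommGroup M] [Module R M] : ℕ∞ :=
  ⨆ (m : ℕ) (x : Fin m → R) (_ : ∀ k, x k ∈ a), kgradeSeq x M

/-- The height of an ideal: the infimum of the heights of the primes containing it. -/
def htIdeal (a : Ideal R) : ℕ∞ :=
  ⨅ (p : PrimeSpectrum R) (_ : a ≤ p.asIdeal), Order.height p

/-- `R` is Cohen-Macaulay in the sense of ideals: `ht a = K.grade(a, R)` for every ideal `a`. -/
def CMIdeals (R : Type*) [CommRing R] : Prop :=
  ∀ a : Ideal R, htIdeal a = kgrade a R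

/-- `R` is Cohen-Macaulay in the sense of finitely generated ideals:
`ht a = K.grade(a, R)` for every finitely generated ideal `a`. -/
def CMFGIdeals (R : Type*) [CommRing R] : Prop :=
  ∀ a : Ideal R, a.FG → htIdeal a = kgrade a R

/-- The Krull dimension of the localized module `M_p` over `R_p`, i.e. the Krull dimension
of the ring `R_p / Ann_{R_p}(M_p)`. -/
def dimLoc (M : Type*) [AddCommGroup M] [Module R M] (p : PrimeSpectrum R) : WithBot ℕ∞ :=
  ringKrullDim ((Localization.AtPrime p.asIdeal) ⧸
    Module.annihilator (Localization.AtPrime p.asIdeal)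
      (LocalizedModule p.asIdeal.primeCompl M))

/-- The `M`-height of an ideal `a`: `inf { dim M_p | p prime, a ⊆ p, M_p ≠ 0 }`
(with `inf ∅ = +∞`). -/
def htMod (a : Ideal R) (M : Type*) [AddCommGroup M] [Module R M] : WithBot ℕ∞ :=
  ⨅ (p : PrimeSpectrum R) (_ : a ≤ p.asIdeal) (_ : p ∈ Module.support R M), dimLoc M p

/-- The weakly associated primes of an `R`-module `M`: the primes which are minimal over
the annihilator `(0 :_R m)` of some element `m` of `M`. -/
def wAss (R : Type*) [CommRing R] (M : Type*) [AddCommGroup M] [Module R M] :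
    Set (Ideal R) :=
  { p | ∃ m : M, p ∈ (Ideal.torsionOf R M m).minimalPrimes }

/-- The minimal number of generators of an ideal, as an element of `ℕ∞`. -/
def mu (a : Ideal R) : ℕ∞ :=
  ⨅ (m : ℕ) (_ : ∃ x : Fin m → R, Ideal.span (Set.range x) = a), (m : ℕ∞)

/-- `R` is weak Bourbaki unmixed: for every finitely generated ideal `a` with `μ(a) ≤ ht a`,
the primes minimal over `a` are exactly the weakly associated primes of `R/a`. -/
def WBUnmixed (R : Type*) [CommRing R] : Prop :=
  ∀ a : Ideal R, a.FG → mu a ≤ htIdeal a →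
    a.minimalPrimes = wAss R (R ⧸ a)

/-- `R` is a coherent ring: every finitely generated ideal is finitely presented
as an `R`-module. -/
def IsCoherent (R : Type*) [CommRing R] : Prop :=
  ∀ I : Ideal R, I.FG → Module.FinitePresentation R I

end Koszul

section ExtGrade

variable {R : Type u} [CommRing R]

/-- The Ext grade of an ideal `a` on `M`: `inf { i | Ext^i_R(R/a, M) ≠ 0 }`
(with `inf ∅ = +∞`). -/
def egrade (a : Ideal R) (M : Type u) [AddCommGroup M] [Module R M] : ℕ∞ :=
  ⨅ (i : ℕ) (_ : Nontrivial
      (((Ext R (ModuleCat.{u} R) i).obj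
        (Opposite.op (ModuleCat.of R (R ⧸ a)))).obj (ModuleCat.of R M))), (i : ℕ∞)

/-- The local cohomology grade of an ideal `a` on `M`: `inf { i | H^i_a(M) ≠ 0 }`,
where `H^i_a(M) = colimₙ Ext^i_R(R/aⁿ, M)` is the `i`-th local cohomology module of `M`
with support in `a` (with `inf ∅ = +∞`). -/
def hgrade (a : Ideal R) (M : Type u) [AddCommGroup M] [Module R M] : ℕ∞ :=
  ⨅ (i : ℕ) (_ : Nontrivial ((localCohomology a i).obj (ModuleCat.of R M))), (i : ℕ∞)

end ExtGrade

section Fixed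

/-- The subring of invariants `R^G` of a group `G` acting on a commutative ring `R`
by ring automorphisms. -/
def fixedSubring (G R : Type*) [Group G] [CommRing R] [MulSemiringAction G R] : Subring R where
  carrier := MulAction.fixedPoints G R
  zero_mem' := fun g => smul_zero g
  one_mem' := fun g => smul_one g
  add_mem' := fun {a b} ha hb g => by rw [smul_add, ha g, hb g]
  mul_mem' := fun {a b} ha hb g => by rw [smul_mul', ha g, hb g]
  neg_mem' := fun {a} ha g => by rw [smul_neg, ha g]

end Fixed

end NNCM
end
namespace NNCM


section KoszulBaseChange
open TensorProduct

variable {R : Type*} [CommRing R] {S : Type*} [CommRing S] [Algebra R S]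

instance finOE (i n : ℕ) : Finite (Fin i ↪o Fin n) :=
  Finite.of_injective (fun f => (f : Fin i → Fin n)) (fun _ _ h => DFunLike.coe_injective h)

lemma flat_baseChange_injective [Module.Flat R S] {A B : Type*} [AddCommGroup A] [Module R A]
    [AddCommGroup B] [Module R B] (f : A →ₗ[R] B) (h : Function.Injective f) :
    Function.Injective (f.baseChange S) := by
  have := Module.Flat.lTensor_preserves_injective_linearMap (M := S) f h
  rwa [show (⇑(f.baseChange S) : S ⊗[R] A → S ⊗[R] B) = ⇑(f.lTensor S) from
    LinearMap.baseChange_eq_ltensor f]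

lemma flat_ker_le_range [Module.Flat R S] {A B C : Type*} [AddCommGroup A] [Module R A]
    [AddCommGroup B] [Module R B] [AddCommGroup C] [Module R C]
    (f : A →ₗ[R] B) (g : B →ₗ[R] C) (h : LinearMap.ker g ≤ LinearMap.range f)
    (z : S ⊗[R] B) (hz : g.baseChange S z = 0) : z ∈ LinearMap.range (f.baseChange S) := by
  have hex : Function.Exact ((LinearMap.ker g).subtype.lTensor S) (g.lTensor S) :=
    Module.Flat.lTensor_exact S g.exact_subtype_ker_map
  have hz' : g.lTensor S z = 0 := by
    rwa [show (⇑(g.baseChange S) : S ⊗[R] B → S ⊗[R] C) = ⇑(g.lTensor S) from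
      LinearMap.baseChange_eq_ltensor g] at hz
  obtain ⟨w, hw⟩ := (hex z).mp hz'
  have key : ∀ w : S ⊗[R] (LinearMap.ker g),
      ((LinearMap.ker g).subtype.lTensor S) w ∈ LinearMap.range (f.baseChange S) := by
    intro w
    induction w using TensorProduct.induction_on with
    | zero => simp
    | tmul s k =>
        obtain ⟨a, ha⟩ := h k.2
        exact ⟨s ⊗ₜ a, by simp [ha]⟩
    | add u v hu hv => rw [map_add]; exact add_mem hu hv
  rw [← hw]; exact key w

variable {n : ℕ} (x : Fin n → R) (M : Type*) [AddCommGroup M] [Module R M]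

/-- The base-change isomorphism on Koszul cochains. -/
noncomputable def kosE (i : ℕ) :
    (S ⊗[R] ((Fin i ↪o Fin n) → M)) ≃ₗ[S] ((Fin i ↪o Fin n) → S ⊗[R] M) :=
  letI : Fintype (Fin i ↪o Fin n) := Fintype.ofFinite _
  letI : DecidableEq (Fin i ↪o Fin n) := Classical.decEq _
  TensorProduct.piRight R S S _

@[simp] lemma kosE_tmul (i : ℕ) (s : S) (f : (Fin i ↪o Fin n) → M) :
    kosE (S := S) M i (s ⊗ₜ[R] f) = fun t => s ⊗ₜ[R] f t := rfl

lemma koszulD_kosE (i : ℕ) (w : S ⊗[R] ((Fin i ↪o Fin n) → M)) :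
    koszulD (fun k => algebraMap R S (x k)) (S ⊗[R] M) i (kosE (S := S) M i w)
      = kosE (S := S) M (i + 1) ((koszulD x M i).baseChange S w) := by
  induction w using TensorProduct.induction_on with
  | zero => simp
  | tmul s f =>
      funext t
      simp only [kosE_tmul, LinearMap.baseChange_tmul, koszulD, LinearMap.coe_mk, AddHom.coe_mk]
      rw [tmul_sum]
      refine Finset.sum_congr rfl fun k _ => ?_
      rw [tmul_smul, tmul_smul, algebraMap_smul]
  | add u v hu hv => simp only [map_add, hu, hv]

end KoszulBaseChange

section KoszulBaseChange2
open TensorProduct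

variable {R : Type*} [CommRing R] {S : Type*} [CommRing S] [Algebra R S]
variable {n : ℕ} (x : Fin n → R) (M : Type*) [AddCommGroup M] [Module R M]

lemma koszulD_eq_kosE (i : ℕ) (z : (Fin i ↪o Fin n) → S ⊗[R] M) :
    koszulD (fun k => algebraMap R S (x k)) (S ⊗[R] M) i z
      = kosE (S := S) M (i + 1) ((koszulD x M i).baseChange S ((kosE (S := S) M i).symm z)) := by
  conv_lhs => rw [← (kosE (S := S) M i).apply_symm_apply z]
  rw [koszulD_kosE]

lemma koszul_vanish_baseChange [Module.Flat R S] (i : ℕ) (h : ¬ koszulHNonzero x M i) :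
    ¬ koszulHNonzero (fun k => algebraMap R S (x k)) (S ⊗[R] M) i := by
  cases i with
  | zero =>
      intro hS
      apply hS
      have hc : LinearMap.ker (koszulD x M 0) = ⊥ := not_not.mp h
      have hinj := flat_baseChange_injective (S := S) _ (LinearMap.ker_eq_bot.mp hc)
      show LinearMap.ker (koszulD (fun k => algebraMap R S (x k)) (S ⊗[R] M) 0) = ⊥
      rw [LinearMap.ker_eq_bot]
      intro z₁ z₂ hz
      rw [koszulD_eq_kosE, koszulD_eq_kosE] at hz
      exact (kosE (S := S) M 0).symm.injective (hinj ((kosE (S := S) M 1).injective hz))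
  | succ j =>
      intro hS
      apply hS
      have hc : LinearMap.ker (koszulD x M (j + 1)) ≤ LinearMap.range (koszulD x M j) :=
        not_not.mp h
      show LinearMap.ker (koszulD (fun k => algebraMap R S (x k)) (S ⊗[R] M) (j + 1))
          ≤ LinearMap.range (koszulD (fun k => algebraMap R S (x k)) (S ⊗[R] M) j)
      intro z hz
      rw [LinearMap.mem_ker, koszulD_eq_kosE] at hz
      have h0 : (koszulD x M (j + 1)).baseChange S ((kosE (S := S) M (j + 1)).symm z) = 0 :=
        (LinearEquiv.map_eq_zero_iff _).mp hz
      obtain ⟨u, hu⟩ := flat_ker_le_range (koszulD x M j) (koszulD x M (j + 1)) hc _ h0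
      refine ⟨kosE (S := S) M j u, ?_⟩
      rw [koszulD_kosE, hu, LinearEquiv.apply_symm_apply]

lemma kgradeSeq_le_baseChange [Module.Flat R S] :
    kgradeSeq x M ≤ kgradeSeq (fun k => algebraMap R S (x k)) (S ⊗[R] M) := by
  refine le_iInf fun i => le_iInf fun hi => ?_
  exact iInf_le_of_le i
    (iInf_le _ (not_imp_not.mp (koszul_vanish_baseChange x M i) hi))

end KoszulBaseChange2

/-- If `R → S` is a flat ring homomorphism, `a` an ideal of `R` and `M` an
`R`-module, then `K.grade_R(a, M) ≤ K.grade_S(aS, S ⊗_R M)`. -/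
theorem kgrade_le_kgrade_baseChange_of_flat
    {R : Type*} [CommRing R] (S : Type*) [CommRing S] [Algebra R S] [Module.Flat R S]
    (a : Ideal R) (M : Type*) [AddCommGroup M] [Module R M] :
    kgrade a M ≤ kgrade (a.map (algebraMap R S)) (TensorProduct R S M) := by
  rw [kgrade, kgrade]
  refine iSup_le fun m => iSup_le fun x => iSup_le fun hx => ?_
  refine le_trans (kgradeSeq_le_baseChange (S := S) x M) ?_
  exact le_iSup_of_le m (le_iSup_of_le (fun k => algebraMap R S (x k))
    (le_iSup_of_le (fun k => Ideal.mem_map_of_mem _ (hx k)) le_rfl))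


end NNCM
end

section
/- Let f : R → S be a homomorphism of commutative rings, let a be an ideal of R and let N be an S-module, regarded as an R-module via f. Then K.grade_R(a, N) = K.grade_S(aS, N). -/
namespace NNCMAux

open Finset

variable {R : Type*} [CommRing R] {M : Type*} [AddCommGroup M] [Module R M]

/-- number of elements of `A` smaller than `j` -/
def pcnt {n : ℕ} (j : Fin n) (A : Finset (Fin n)) : ℕ := (A.filter (· < j)).card

/-- sign of `j` inside `A` -/
def msgn {n : ℕ} (j : Fin n) (A : Finset (Fin n)) : ℤ := (-1) ^ pcnt j A

/-- model Koszul differential -/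
def mD {n : ℕ} (x : Fin n → R) (M : Type*) [AddCommGroup M] [Module R M] :
    (Finset (Fin n) → M) →ₗ[R] (Finset (Fin n) → M) where
  toFun F := fun A => ∑ j ∈ A, msgn j A • x j • F (A.erase j)
  map_add' F G := by
    funext A
    simp [smul_add, Finset.sum_add_distrib]
  map_smul' c F := by
    funext A
    rw [RingHom.id_apply]
    simp only [Pi.smul_apply, Finset.smul_sum]
    refine Finset.sum_congr rfl fun k _ => ?_
    rw [smul_comm c, smul_comm c]

lemma mD_apply {n : ℕ} (x : Fin n → R) (F : Finset (Fin n) → M) (A : Finset (Fin n)) :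
    mD x M F A = ∑ j ∈ A, msgn j A • x j • F (A.erase j) := rfl

lemma pcnt_insert_self {n : ℕ} (j : Fin n) (C : Finset (Fin n)) :
    pcnt j (insert j C) = pcnt j C := by
  unfold pcnt
  rw [Finset.filter_insert, if_neg (lt_irrefl j)]

lemma pcnt_insert {n : ℕ} (j l : Fin n) (C : Finset (Fin n)) (hne : l ≠ j) (hl : l ∉ C) :
    pcnt j (insert l C) = pcnt j C + (if l < j then 1 else 0) := by
  unfold pcnt
  rw [Finset.filter_insert]
  split_ifs with h
  · rw [Finset.card_insert_of_notMem (fun hc => hl (Finset.mem_of_mem_filter _ hc))]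
  · rw [Nat.add_zero]

lemma msgn_mul_self {n : ℕ} (j : Fin n) (A : Finset (Fin n)) (m : M) :
    msgn j A • msgn j A • m = m := by
  have h : msgn j A * msgn j A = 1 := by
    unfold msgn; rw [← pow_add]; exact Even.neg_one_pow ⟨pcnt j A, rfl⟩
  rw [smul_smul, h, one_smul]

end NNCMAux

namespace NNCMAux2
open NNCMAux Finset

variable {R : Type*} [CommRing R] {M : Type*} [AddCommGroup M] [Module R M]

lemma sign_pair {n : ℕ} {j l : Fin n} {A : Finset (Fin n)} (hj : j ∈ A) (hl : l ∈ A)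
    (hne : j ≠ l) :
    msgn j A * msgn l (A.erase j) = -(msgn l A * msgn j (A.erase l)) := by
  have e1 : pcnt l A = pcnt l (A.erase j) + (if j < l then 1 else 0) := by
    conv_lhs => rw [← Finset.insert_erase hj]
    exact pcnt_insert l j _ hne (Finset.notMem_erase _ _)
  have e2 : pcnt j A = pcnt j (A.erase l) + (if l < j then 1 else 0) := by
    conv_lhs => rw [← Finset.insert_erase hl]
    exact pcnt_insert j l _ hne.symm (Finset.notMem_erase _ _)
  unfold msgn
  rw [e1, e2]
  rcases hne.lt_or_gt with h | h
  · rw [if_pos h, if_neg (asymm h)]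
    ring
  · rw [if_neg (asymm h), if_pos h]
    ring

lemma smul_reorg (a b : ℤ) (r s : R) (m : M) :
    a • r • b • s • m = (a * b) • (r * s) • m := by
  rw [smul_comm r b, smul_smul a b, smul_smul r s]

lemma mD_mD {n : ℕ} (x : Fin n → R) (F : Finset (Fin n) → M) :
    mD x M (mD x M F) = 0 := by
  funext A
  show ∑ j ∈ A, msgn j A • x j • mD x M F (A.erase j) = 0
  have : ∀ j ∈ A, msgn j A • x j • mD x M F (A.erase j) =
      ∑ l ∈ A.erase j,
        (msgn j A * msgn l (A.erase j)) • ((x j * x l) • F ((A.erase j).erase l)) := by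
    intro j _
    rw [mD_apply, Finset.smul_sum, Finset.smul_sum]
    exact Finset.sum_congr rfl fun l _ => smul_reorg _ _ _ _ _
  rw [Finset.sum_congr rfl this, Finset.sum_sigma']
  refine Finset.sum_involution (fun p _ => ⟨p.2, p.1⟩) ?_ ?_ ?_ ?_
  · rintro ⟨j, l⟩ hp
    rw [Finset.mem_sigma] at hp
    obtain ⟨hj, hl'⟩ := hp
    have hne : j ≠ l := fun h => (Finset.mem_erase.mp hl').1 h.symm
    have hl : l ∈ A := Finset.mem_of_mem_erase hl'
    dsimp only
    rw [sign_pair hj hl hne, mul_comm (x j) (x l), Finset.erase_right_comm,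
      neg_smul, neg_add_cancel]
  · rintro ⟨j, l⟩ hp _
    rw [Finset.mem_sigma] at hp
    intro h
    have h1 : j = l := congrArg Sigma.fst h.symm
    exact (Finset.mem_erase.mp hp.2).1 h1.symm
  · rintro ⟨j, l⟩ hp
    rw [Finset.mem_sigma] at hp ⊢
    have hne : l ≠ j := (Finset.mem_erase.mp hp.2).1
    exact ⟨Finset.mem_of_mem_erase hp.2, Finset.mem_erase.mpr ⟨hne.symm ∘ Eq.symm ∘ Eq.symm, hp.1⟩⟩
  · rintro ⟨j, l⟩ _
    rfl

end NNCMAux2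

namespace NNCMAux3
open NNCMAux NNCMAux2 Finset

variable {R : Type*} [CommRing R] {M : Type*} [AddCommGroup M] [Module R M]

/-- projection to the degree-`i` part -/
def prj {n : ℕ} (i : ℕ) (F : Finset (Fin n) → M) : Finset (Fin n) → M :=
  fun A => if A.card = i then F A else 0

lemma mD_prj {n : ℕ} (x : Fin n → R) (i : ℕ) (F : Finset (Fin n) → M) :
    mD x M (prj i F) = prj (i + 1) (mD x M F) := by
  funext A
  by_cases h : A.card = i + 1
  · have : ∀ j ∈ A, prj i F (A.erase j) = F (A.erase j) := by
      intro j hj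
      unfold prj
      rw [if_pos (by rw [Finset.card_erase_of_mem hj, h]; rfl)]
    unfold prj at this ⊢
    rw [if_pos h, mD_apply, mD_apply]
    exact Finset.sum_congr rfl fun j hj => by rw [this j hj]
  · have : ∀ j ∈ A, prj i F (A.erase j) = 0 := by
      intro j hj
      unfold prj
      rw [if_neg]
      intro hc
      rw [Finset.card_erase_of_mem hj] at hc
      have h1 : 1 ≤ A.card := Finset.card_pos.mpr ⟨j, hj⟩
      omega
    unfold prj at this ⊢
    rw [if_neg h, mD_apply]
    exact Finset.sum_eq_zero fun j hj => by rw [this j hj, smul_zero, smul_zero]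

/-- contraction homotopy -/
def hup {n : ℕ} (j : Fin n) (F : Finset (Fin n) → M) : Finset (Fin n) → M :=
  fun A => if j ∈ A then 0 else msgn j (insert j A) • F (insert j A)

lemma sign_pair2 {n : ℕ} {j l : Fin n} {A : Finset (Fin n)} (hl : l ∈ A) (hj : j ∉ A) :
    msgn l A * msgn j (insert j (A.erase l)) + msgn j (insert j A) * msgn l (insert j A) = 0 := by
  have hne : j ≠ l := fun h => hj (h ▸ hl)
  have e1 : pcnt j (insert j (A.erase l)) = pcnt j (A.erase l) := pcnt_insert_self _ _
  have e2 : pcnt j (insert j A) = pcnt j A := pcnt_insert_self _ _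
  have e3 : pcnt j A = pcnt j (A.erase l) + (if l < j then 1 else 0) := by
    conv_lhs => rw [← Finset.insert_erase hl]
    exact pcnt_insert j l _ hne.symm (Finset.notMem_erase _ _)
  have e4 : pcnt l (insert j A) = pcnt l A + (if j < l then 1 else 0) :=
    pcnt_insert l j _ hne hj
  unfold msgn
  rw [e1, e2, e3, e4]
  rcases hne.lt_or_gt with h | h
  · rw [if_pos h, if_neg (asymm h)]
    ring
  · rw [if_neg (asymm h), if_pos h]
    ring

lemma hup_homotopy {n : ℕ} (x : Fin n → R) (j : Fin n) (F : Finset (Fin n) → M) :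
    mD x M (hup j F) + hup j (mD x M F) = x j • F := by
  funext A
  rw [Pi.add_apply, Pi.smul_apply]
  by_cases hj : j ∈ A
  · have h2 : hup j (mD x M F) A = 0 := if_pos hj
    have h1 : mD x M (hup j F) A = x j • F A := by
      rw [mD_apply]
      rw [Finset.sum_eq_single j]
      · have : hup j F (A.erase j) = msgn j A • F A := by
          unfold hup
          rw [if_neg (Finset.notMem_erase _ _), Finset.insert_erase hj]
        rw [this, smul_comm (x j) (msgn j A), msgn_mul_self]
      · intro l hl hne
        have : hup j F (A.erase l) = 0 :=
          if_pos (Finset.mem_erase.mpr ⟨fun h => hne h.symm, hj⟩)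
        rw [this, smul_zero, smul_zero]
      · intro h
        exact absurd hj h
    rw [h1, h2, add_zero]
  · -- j ∉ A
    have h2 : hup j (mD x M F) A
        = x j • F A + ∑ l ∈ A, (msgn j (insert j A) * msgn l (insert j A)) •
            (x l • F ((insert j A).erase l)) := by
      show (if j ∈ A then 0 else msgn j (insert j A) • mD x M F (insert j A)) = _
      rw [if_neg hj, mD_apply, Finset.sum_insert hj, smul_add, Finset.smul_sum]
      congr 1
      · rw [Finset.erase_insert hj, msgn_mul_self]
      · exact Finset.sum_congr rfl fun l _ => by rw [smul_smul]
    have h1 : mD x M (hup j F) A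
        = ∑ l ∈ A, (msgn l A * msgn j (insert j (A.erase l))) •
            (x l • F (insert j (A.erase l))) := by
      rw [mD_apply]
      refine Finset.sum_congr rfl fun l hl => ?_
      have : hup j F (A.erase l) =
          msgn j (insert j (A.erase l)) • F (insert j (A.erase l)) :=
        if_neg (fun h => hj (Finset.mem_of_mem_erase h))
      rw [this, smul_comm (x l), smul_smul]
    rw [h1, h2, ← add_assoc, add_comm _ (x j • F A), add_assoc, ← Finset.sum_add_distrib]
    have : ∀ l ∈ A, (msgn l A * msgn j (insert j (A.erase l))) •
            (x l • F (insert j (A.erase l)))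
          + (msgn j (insert j A) * msgn l (insert j A)) • (x l • F ((insert j A).erase l))
          = 0 := by
      intro l hl
      have hne : j ≠ l := fun h => hj (h ▸ hl)
      rw [Finset.erase_insert_of_ne hne, ← add_smul, sign_pair2 hl hj, zero_smul]
    rw [Finset.sum_eq_zero this, add_zero]

end NNCMAux3


namespace NNCMAux4
open NNCMAux NNCMAux2 NNCMAux3 NNCM Finset

variable {R : Type*} [CommRing R] {M : Type*} [AddCommGroup M] [Module R M]

/-- the range of an order embedding, as a `Finset` -/
def toFS {i n : ℕ} (s : Fin i ↪o Fin n) : Finset (Fin n) := univ.map s.toEmbedding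

lemma mem_toFS {i n : ℕ} (s : Fin i ↪o Fin n) (a : Fin n) :
    a ∈ toFS s ↔ ∃ k, s k = a := by
  simp [toFS]

lemma card_toFS {i n : ℕ} (s : Fin i ↪o Fin n) : (toFS s).card = i := by
  simp [toFS]

lemma toFS_orderEmbOfFin {i n : ℕ} (A : Finset (Fin n)) (h : A.card = i) :
    toFS (A.orderEmbOfFin h) = A := by
  ext a
  rw [mem_toFS]
  constructor
  · rintro ⟨k, rfl⟩
    exact A.orderEmbOfFin_mem h k
  · intro ha
    have := A.range_orderEmbOfFin h
    have : a ∈ Set.range (A.orderEmbOfFin h) := by rw [this]; exact ha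
    exact this

lemma orderEmbOfFin_toFS {i n : ℕ} (s : Fin i ↪o Fin n) :
    (toFS s).orderEmbOfFin (card_toFS s) = s :=
  (Finset.orderEmbOfFin_unique' _ (fun k => (mem_toFS s _).mpr ⟨k, rfl⟩)).symm

lemma fin_filter_lt_card {m : ℕ} (k : Fin m) :
    ((univ : Finset (Fin m)).filter (· < k)).card = (k : ℕ) := by
  have : (univ : Finset (Fin m)).filter (· < k) = Finset.Iio k := by
    ext a; simp
  rw [this, Fin.card_Iio]

lemma pcnt_toFS {i n : ℕ} (s : Fin i ↪o Fin n) (k : Fin i) :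
    pcnt (s k) (toFS s) = (k : ℕ) := by
  unfold pcnt toFS
  rw [Finset.filter_map, Finset.card_map]
  rw [show ((univ : Finset (Fin i)).filter ((· < s k) ∘ s.toEmbedding)) = (univ.filter (· < k))
    from Finset.filter_congr fun l _ => by
      simp only [Function.comp_apply, RelEmbedding.coe_toEmbedding, eq_iff_iff]
      exact s.lt_iff_lt]
  exact fin_filter_lt_card k

lemma pcnt_orderEmbOfFin {i n : ℕ} (A : Finset (Fin n)) (h : A.card = i) (k : Fin i) :
    pcnt (A.orderEmbOfFin h k) A = (k : ℕ) := by
  have := pcnt_toFS (A.orderEmbOfFin h) k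
  rwa [toFS_orderEmbOfFin] at this

def up {n : ℕ} (i : ℕ) (f : (Fin i ↪o Fin n) → M) : Finset (Fin n) → M :=
  fun A => if h : A.card = i then f (A.orderEmbOfFin h) else 0

def dn {n : ℕ} (i : ℕ) (F : Finset (Fin n) → M) : (Fin i ↪o Fin n) → M :=
  fun s => F (toFS s)

lemma dn_up {n : ℕ} (i : ℕ) (f : (Fin i ↪o Fin n) → M) : dn i (up i f) = f := by
  funext s
  unfold dn up
  rw [dif_pos (card_toFS s)]
  rw [orderEmbOfFin_toFS]

lemma up_dn {n : ℕ} (i : ℕ) (F : Finset (Fin n) → M) : up i (dn i F) = prj i F := by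
  funext A
  unfold up dn prj
  by_cases h : A.card = i
  · rw [dif_pos h, if_pos h, toFS_orderEmbOfFin]
  · rw [dif_neg h, if_neg h]

lemma up_koszulD {n : ℕ} (x : Fin n → R) (i : ℕ) (f : (Fin i ↪o Fin n) → M) :
    up (i+1) (koszulD x M i f) = mD x M (up i f) := by
  funext A
  by_cases h : A.card = i + 1
  · rw [mD_apply]
    unfold up
    rw [dif_pos h]
    show ∑ k : Fin (i + 1), ((-1 : ℤ) ^ (k : ℕ)) • x (A.orderEmbOfFin h k) •
        f ((Fin.succAboveOrderEmb k).trans (A.orderEmbOfFin h)) = _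
    refine Finset.sum_bij (fun (k : Fin (i+1)) _ => A.orderEmbOfFin h k)
      (fun k _ => A.orderEmbOfFin_mem h k)
      (fun k _ l _ hkl => (A.orderEmbOfFin h).injective hkl)
      (fun b hb => ?_) (fun k _ => ?_)
    · have : b ∈ toFS (A.orderEmbOfFin h) := by rw [toFS_orderEmbOfFin]; exact hb
      obtain ⟨k, hk⟩ := (mem_toFS _ _).mp this
      exact ⟨k, Finset.mem_univ k, hk⟩
    · have hmem : A.orderEmbOfFin h k ∈ A := A.orderEmbOfFin_mem h k
      have hc : (A.erase (A.orderEmbOfFin h k)).card = i := by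
        rw [Finset.card_erase_of_mem hmem, h]; rfl
      have he : (Fin.succAboveOrderEmb k).trans (A.orderEmbOfFin h)
          = (A.erase (A.orderEmbOfFin h k)).orderEmbOfFin hc := by
        refine Finset.orderEmbOfFin_unique' _ (fun l => Finset.mem_erase.mpr ⟨?_, ?_⟩)
        · exact fun hcontra => Fin.succAbove_ne k l ((A.orderEmbOfFin h).injective hcontra)
        · exact A.orderEmbOfFin_mem h (k.succAbove l)
      rw [dif_pos hc, ← he]
      congr 1
      unfold msgn
      rw [pcnt_orderEmbOfFin]
  · rw [mD_apply]
    unfold up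
    rw [dif_neg h]
    refine (Finset.sum_eq_zero fun j hj => ?_).symm
    have : (A.erase j).card ≠ i := by
      rw [Finset.card_erase_of_mem hj]
      have h1 : 1 ≤ A.card := Finset.card_pos.mpr ⟨j, hj⟩
      omega
    rw [dif_neg this, smul_zero, smul_zero]

end NNCMAux4

namespace NNCMAux5
open NNCMAux NNCMAux2 NNCMAux3 NNCMAux4 NNCM Finset

variable {R : Type*} [CommRing R] {M : Type*} [AddCommGroup M] [Module R M]

/-- model analogue of `koszulHNonzero` -/
def mH {n : ℕ} (x : Fin n → R) (M : Type*) [AddCommGroup M] [Module R M] : ℕ → Prop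
  | 0 => ∃ F : Finset (Fin n) → M, (∀ A, A.card ≠ 0 → F A = 0) ∧ mD x M F = 0 ∧ F ≠ 0
  | (i + 1) => ∃ F : Finset (Fin n) → M, (∀ A, A.card ≠ i + 1 → F A = 0) ∧ mD x M F = 0 ∧
      ∀ G : Finset (Fin n) → M, mD x M G ≠ F

lemma prj_of_deg {n : ℕ} {i : ℕ} {F : Finset (Fin n) → M} (h : ∀ A, A.card ≠ i → F A = 0) :
    prj i F = F := by
  funext A
  unfold prj
  by_cases hc : A.card = i
  · rw [if_pos hc]
  · rw [if_neg hc, (h A hc).symm]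

lemma up_deg {n : ℕ} (i : ℕ) (f : (Fin i ↪o Fin n) → M) :
    ∀ A : Finset (Fin n), A.card ≠ i → up i f A = 0 := by
  intro A hA
  unfold up
  rw [dif_neg hA]

lemma up_injective {n : ℕ} (i : ℕ) {f g : (Fin i ↪o Fin n) → M}
    (h : up i f = up i g) : f = g := by
  have := congrArg (dn i) h
  rwa [dn_up, dn_up] at this

lemma up_eq_zero_iff {n : ℕ} (i : ℕ) {f : (Fin i ↪o Fin n) → M} :
    up i f = 0 ↔ f = 0 := by
  constructor
  · intro h
    have : up i f = up i (0 : (Fin i ↪o Fin n) → M) := by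
      rw [h]
      funext A
      unfold up
      split <;> rfl
    exact up_injective i this
  · rintro rfl
    funext A
    unfold up
    split <;> rfl

lemma koszulD_dn {n : ℕ} (x : Fin n → R) (i : ℕ) (F : Finset (Fin n) → M) :
    koszulD x M i (dn i F) = dn (i+1) (mD x M (prj i F)) := by
  have h1 : up (i+1) (koszulD x M i (dn i F)) = mD x M (prj i F) := by
    rw [up_koszulD, up_dn]
  have := congrArg (dn (i+1)) h1
  rwa [dn_up] at this

lemma mH_iff {n : ℕ} (x : Fin n → R) (i : ℕ) :
    koszulHNonzero x M i ↔ mH x M i := by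
  cases i with
  | zero =>
    show LinearMap.ker (koszulD x M 0) ≠ ⊥ ↔ _
    rw [Submodule.ne_bot_iff]
    constructor
    · rintro ⟨f, hker, hne⟩
      rw [LinearMap.mem_ker] at hker
      refine ⟨up 0 f, up_deg 0 f, ?_, ?_⟩
      · rw [← up_koszulD, hker]
        funext A
        unfold up
        split <;> rfl
      · intro h
        exact hne (up_eq_zero_iff 0 |>.mp h)
    · rintro ⟨F, hdeg, hD, hne⟩
      refine ⟨dn 0 F, ?_, ?_⟩
      · rw [LinearMap.mem_ker, koszulD_dn, prj_of_deg hdeg, hD]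
        funext s
        unfold dn
        rfl
      · intro h
        apply hne
        have : up 0 (dn 0 F) = up 0 (0 : (Fin 0 ↪o Fin n) → M) := by rw [h]
        rw [up_dn, prj_of_deg hdeg] at this
        rw [this]
        funext A
        unfold up
        split <;> rfl
  | succ i =>
    show ¬ LinearMap.ker (koszulD x M (i+1)) ≤ LinearMap.range (koszulD x M i) ↔ _
    rw [SetLike.not_le_iff_exists]
    constructor
    · rintro ⟨f, hker, hnr⟩
      rw [LinearMap.mem_ker] at hker
      refine ⟨up (i+1) f, up_deg (i+1) f, ?_, ?_⟩
      · rw [← up_koszulD, hker]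
        funext A
        unfold up
        split <;> rfl
      · intro G hG
        apply hnr
        refine ⟨dn i G, ?_⟩
        rw [koszulD_dn, mD_prj, hG, prj_of_deg (up_deg (i+1) f), dn_up]
    · rintro ⟨F, hdeg, hD, hnb⟩
      refine ⟨dn (i+1) F, ?_, ?_⟩
      · rw [LinearMap.mem_ker, koszulD_dn, prj_of_deg hdeg, hD]
        funext s
        unfold dn
        rfl
      · intro hr
        obtain ⟨g, hg⟩ := hr
        apply hnb (up i g)
        rw [← up_koszulD, hg, up_dn, prj_of_deg hdeg]

end NNCMAux5

namespace NNCMAux6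
open NNCMAux NNCMAux2 NNCMAux3 NNCMAux4 NNCMAux5 NNCM Finset

variable {R : Type*} [CommRing R] {M : Type*} [AddCommGroup M] [Module R M]

lemma hup_zero {n : ℕ} (j : Fin n) : hup j (0 : Finset (Fin n) → M) = 0 := by
  funext A
  unfold hup
  split
  · rfl
  · rw [Pi.zero_apply, smul_zero]; rfl

lemma smul_eq_zero_of_span {n : ℕ} {x : Fin n → R} {z : R}
    (hz : z ∈ Ideal.span (Set.range x)) (m : M) (h : ∀ j, x j • m = 0) : z • m = 0 := by
  have hz' : z ∈ Submodule.span R (Set.range x) := hz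
  obtain ⟨c, rfl⟩ := (Submodule.mem_span_range_iff_exists_fun R).mp hz'
  rw [Finset.sum_smul]
  refine Finset.sum_eq_zero fun j _ => ?_
  rw [smul_eq_mul, ← smul_smul, h j, smul_zero]

lemma exists_mD_eq_smul {n : ℕ} (x : Fin n → R) {z : R}
    (hz : z ∈ Ideal.span (Set.range x)) {F : Finset (Fin n) → M} (hF : mD x M F = 0) :
    ∃ G : Finset (Fin n) → M, mD x M G = z • F := by
  have hz' : z ∈ Submodule.span R (Set.range x) := hz
  obtain ⟨c, rfl⟩ := (Submodule.mem_span_range_iff_exists_fun R).mp hz'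
  refine ⟨∑ j : Fin n, c j • hup j F, ?_⟩
  rw [map_sum]
  have : ∀ j : Fin n, mD x M (c j • hup j F) = c j • (x j • F) := by
    intro j
    rw [map_smul]
    congr 1
    have := hup_homotopy x j F
    rw [hF, hup_zero, add_zero] at this
    exact this
  rw [Finset.sum_congr rfl fun j _ => this j]
  rw [Finset.sum_smul]
  refine Finset.sum_congr rfl fun j _ => ?_
  rw [smul_smul, smul_eq_mul]

/-! ### the `cons` decomposition -/

def mapUp {n : ℕ} (A : Finset (Fin n)) : Finset (Fin (n + 1)) := A.map (Fin.succEmb n)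

noncomputable def unUp {n : ℕ} (B : Finset (Fin (n + 1))) : Finset (Fin n) :=
  B.preimage Fin.succ ((Fin.succ_injective n).injOn)

lemma mem_unUp {n : ℕ} (B : Finset (Fin (n + 1))) (l : Fin n) :
    l ∈ unUp B ↔ l.succ ∈ B := Finset.mem_preimage

lemma mem_mapUp {n : ℕ} (A : Finset (Fin n)) (l : Fin n) :
    l.succ ∈ mapUp A ↔ l ∈ A := by
  unfold mapUp
  exact ⟨fun h => by
    obtain ⟨a, ha, hal⟩ := Finset.mem_map.mp h
    rwa [show a = l from Fin.succ_injective n hal] at ha,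
    fun h => Finset.mem_map_of_mem _ h⟩

lemma zero_not_mem_mapUp {n : ℕ} (A : Finset (Fin n)) : (0 : Fin (n+1)) ∉ mapUp A := by
  unfold mapUp
  intro h
  obtain ⟨a, _, hal⟩ := Finset.mem_map.mp h
  exact Fin.succ_ne_zero a hal

lemma unUp_mapUp {n : ℕ} (A : Finset (Fin n)) : unUp (mapUp A) = A := by
  ext l
  rw [mem_unUp, mem_mapUp]

lemma mapUp_unUp {n : ℕ} (B : Finset (Fin (n + 1))) : mapUp (unUp B) = B.erase 0 := by
  ext a
  cases a using Fin.cases with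
  | zero =>
    simp only [zero_not_mem_mapUp, false_iff]
    exact fun h => absurd rfl (Finset.mem_erase.mp h).1
  | succ l =>
    rw [mem_mapUp, mem_unUp, Finset.mem_erase]
    exact ⟨fun h => ⟨Fin.succ_ne_zero l, h⟩, fun h => h.2⟩

lemma mapUp_unUp_of_not_mem {n : ℕ} {B : Finset (Fin (n + 1))} (h : (0 : Fin (n+1)) ∉ B) :
    mapUp (unUp B) = B := by
  rw [mapUp_unUp, Finset.erase_eq_of_notMem h]

lemma card_mapUp {n : ℕ} (A : Finset (Fin n)) : (mapUp A).card = A.card := Finset.card_map _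

lemma unUp_insert_zero {n : ℕ} (B : Finset (Fin (n + 1))) :
    unUp (insert 0 B) = unUp B := by
  ext l
  rw [mem_unUp, mem_unUp, Finset.mem_insert]
  exact ⟨fun h => h.resolve_left (Fin.succ_ne_zero l), Or.inr⟩

lemma mapUp_erase {n : ℕ} (A : Finset (Fin n)) (l : Fin n) :
    mapUp (A.erase l) = (mapUp A).erase l.succ := Finset.map_erase _ _ _

lemma pcnt_succ_mapUp {n : ℕ} (A : Finset (Fin n)) (l : Fin n) :
    pcnt l.succ (mapUp A) = pcnt l A := by
  unfold pcnt mapUp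
  rw [Finset.filter_map, Finset.card_map]
  congr 1
  refine Finset.filter_congr fun a _ => ?_
  simp only [Function.comp_apply, eq_iff_iff]
  exact Fin.succ_lt_succ_iff

lemma pcnt_zero {n : ℕ} (B : Finset (Fin (n + 1))) : pcnt (0 : Fin (n+1)) B = 0 := by
  unfold pcnt
  rw [Finset.filter_false_of_mem fun a _ => Fin.not_lt_zero a, Finset.card_empty]

lemma pcnt_succ_insert_zero {n : ℕ} {C : Finset (Fin (n + 1))} (h : (0 : Fin (n+1)) ∉ C)
    (l : Fin n) : pcnt l.succ (insert 0 C) = pcnt l.succ C + 1 := by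
  rw [pcnt_insert l.succ 0 C (Fin.succ_ne_zero l).symm h, if_pos (Fin.succ_pos l)]

lemma succEmb_coe {n : ℕ} : ⇑(Fin.succEmb n) = Fin.succ := rfl

lemma sum_mapUp {n : ℕ} {β : Type*} [AddCommMonoid β] (A : Finset (Fin n))
    (f : Fin (n+1) → β) : ∑ b ∈ mapUp A, f b = ∑ l ∈ A, f l.succ := by
  unfold mapUp
  rw [Finset.sum_map]
  simp only [succEmb_coe]

lemma mD_cons_rho {n : ℕ} (z : R) (x : Fin n → R) (G : Finset (Fin (n+1)) → M)
    (A : Finset (Fin n)) :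
    mD (Fin.cons z x) M G (mapUp A) = mD x M (fun C => G (mapUp C)) A := by
  rw [mD_apply, mD_apply, sum_mapUp]
  refine Finset.sum_congr rfl fun l hl => ?_
  rw [Fin.cons_succ, ← mapUp_erase]
  unfold msgn
  rw [pcnt_succ_mapUp]

lemma mD_cons_pi {n : ℕ} (z : R) (x : Fin n → R) (G : Finset (Fin (n+1)) → M)
    (A : Finset (Fin n)) :
    mD (Fin.cons z x) M G (insert 0 (mapUp A))
      = z • G (mapUp A) - mD x M (fun C => G (insert 0 (mapUp C))) A := by
  rw [mD_apply, mD_apply, Finset.sum_insert (zero_not_mem_mapUp A)]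
  have h0 : msgn (0 : Fin (n+1)) (insert 0 (mapUp A)) • (Fin.cons z x : Fin (n+1) → R) 0 •
      G ((insert 0 (mapUp A)).erase 0) = z • G (mapUp A) := by
    unfold msgn
    rw [pcnt_zero, pow_zero, one_smul, Fin.cons_zero, Finset.erase_insert (zero_not_mem_mapUp A)]
  rw [h0, sub_eq_add_neg]
  congr 1
  rw [sum_mapUp, ← Finset.sum_neg_distrib]
  refine Finset.sum_congr rfl fun l hl => ?_
  rw [Fin.cons_succ,
    Finset.erase_insert_of_ne (Fin.succ_ne_zero l).symm, ← mapUp_erase]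
  have hsg : msgn l.succ (insert 0 (mapUp A)) = - msgn l A := by
    unfold msgn
    rw [pcnt_succ_insert_zero (zero_not_mem_mapUp A), pcnt_succ_mapUp, pow_succ]
    ring
  rw [hsg, neg_smul]

end NNCMAux6

namespace NNCMAux7
open NNCMAux NNCMAux2 NNCMAux3 NNCMAux4 NNCMAux5 NNCMAux6 NNCM Finset

variable {R : Type*} [CommRing R] {M : Type*} [AddCommGroup M] [Module R M]

lemma card_unUp_of_mem {n : ℕ} {B : Finset (Fin (n+1))} (h : (0 : Fin (n+1)) ∈ B) :
    (unUp B).card = B.card - 1 := by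
  rw [← card_mapUp, mapUp_unUp, Finset.card_erase_of_mem h]

lemma card_unUp_of_not_mem {n : ℕ} {B : Finset (Fin (n+1))} (h : (0 : Fin (n+1)) ∉ B) :
    (unUp B).card = B.card := by
  rw [← card_mapUp, mapUp_unUp_of_not_mem h]

lemma mH_cons {n : ℕ} {x : Fin n → R} {z : R} (hz : z ∈ Ideal.span (Set.range x))
    (i : ℕ) (h : mH x M i) : mH (Fin.cons z x) M i := by
  cases i with
  | zero =>
    obtain ⟨F, hdeg, hD, hne⟩ := h
    refine ⟨fun B => if (0 : Fin (n+1)) ∈ B then 0 else F (unUp B), ?_, ?_, ?_⟩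
    · intro B hB
      dsimp only
      by_cases h0 : (0 : Fin (n+1)) ∈ B
      · rw [if_pos h0]
      · rw [if_neg h0]
        exact hdeg _ (by rw [card_unUp_of_not_mem h0]; exact hB)
    · funext B
      by_cases h0 : (0 : Fin (n+1)) ∈ B
      · have hBe : B = insert 0 (mapUp (unUp B)) := by
          rw [mapUp_unUp, Finset.insert_erase h0]
        rw [Pi.zero_apply, hBe, mD_cons_pi]
        have e1 : (fun C => if (0:Fin (n+1)) ∈ insert 0 (mapUp C) then 0 else F (unUp (insert 0 (mapUp C)))) = (0 : Finset (Fin n) → M) := by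
          funext C
          rw [if_pos (Finset.mem_insert_self _ _)]
          rfl
        have e2 : (if (0:Fin (n+1)) ∈ mapUp (unUp B) then 0 else F (unUp (mapUp (unUp B)))) = F (unUp B) := by
          rw [if_neg (zero_not_mem_mapUp _), unUp_mapUp]
        rw [e1, e2, map_zero, Pi.zero_apply, sub_zero]
        -- z • F A = 0 since x j • F = 0 for all j
        refine smul_eq_zero_of_span hz _ fun j => ?_
        by_cases hc : (unUp B).card = 0
        · -- unUp B = ∅; use cocycle at {j}
          have h1 := congrFun hD {j}
          rw [mD_apply, Pi.zero_apply, Finset.sum_singleton, Finset.erase_singleton] at h1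
          have hsg : msgn j {j} = 1 := by
            unfold msgn pcnt
            rw [Finset.filter_singleton, if_neg (lt_irrefl j), Finset.card_empty, pow_zero]
          rw [hsg, one_smul] at h1
          rw [Finset.card_eq_zero.mp hc] at *
          exact h1
        · rw [hdeg _ hc, smul_zero]
      · have hBe : B = mapUp (unUp B) := (mapUp_unUp_of_not_mem h0).symm
        rw [Pi.zero_apply, hBe, mD_cons_rho]
        have e : (fun C => if (0:Fin (n+1)) ∈ mapUp C then 0 else F (unUp (mapUp C))) = F := by
          funext C
          rw [if_neg (zero_not_mem_mapUp _), unUp_mapUp]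
        rw [e, hD]
        rfl
    · intro hzero
      apply hne
      funext A
      have := congrFun hzero (mapUp A)
      rw [if_neg (zero_not_mem_mapUp _), unUp_mapUp] at this
      exact this
  | succ i =>
    obtain ⟨F, hdeg, hD, hnb⟩ := h
    obtain ⟨G0, hG0⟩ := exists_mD_eq_smul x hz hD
    set G : Finset (Fin n) → M := prj i G0 with hGdef
    have hGdeg : ∀ A : Finset (Fin n), A.card ≠ i → G A = 0 := by
      intro A hA
      rw [hGdef]
      unfold prj
      rw [if_neg hA]
    have hG : mD x M G = z • F := by
      rw [hGdef, mD_prj, hG0]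
      funext A
      unfold prj
      by_cases hc : A.card = i + 1
      · rw [if_pos hc]
      · rw [if_neg hc, Pi.smul_apply, hdeg _ hc, smul_zero]
    refine ⟨fun B => if (0 : Fin (n+1)) ∈ B then G (unUp B) else F (unUp B), ?_, ?_, ?_⟩
    · intro B hB
      dsimp only
      by_cases h0 : (0 : Fin (n+1)) ∈ B
      · rw [if_pos h0]
        refine hGdeg _ fun hc => hB ?_
        rw [card_unUp_of_mem h0] at hc
        have : 1 ≤ B.card := Finset.card_pos.mpr ⟨0, h0⟩
        omega
      · rw [if_neg h0]
        exact hdeg _ (by rw [card_unUp_of_not_mem h0]; exact hB)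
    · funext B
      by_cases h0 : (0 : Fin (n+1)) ∈ B
      · have hBe : B = insert 0 (mapUp (unUp B)) := by
          rw [mapUp_unUp, Finset.insert_erase h0]
        rw [Pi.zero_apply, hBe, mD_cons_pi]
        have e1 : (fun C => if (0:Fin (n+1)) ∈ insert 0 (mapUp C) then G (unUp (insert 0 (mapUp C))) else F (unUp (insert 0 (mapUp C)))) = G := by
          funext C
          rw [if_pos (Finset.mem_insert_self _ _), unUp_insert_zero, unUp_mapUp]
        have e2 : (if (0:Fin (n+1)) ∈ mapUp (unUp B) then G (unUp (mapUp (unUp B))) else F (unUp (mapUp (unUp B)))) = F (unUp B) := by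
          rw [if_neg (zero_not_mem_mapUp _), unUp_mapUp]
        rw [e1, e2, hG, Pi.smul_apply, sub_self]
      · have hBe : B = mapUp (unUp B) := (mapUp_unUp_of_not_mem h0).symm
        rw [Pi.zero_apply, hBe, mD_cons_rho]
        have e : (fun C => if (0:Fin (n+1)) ∈ mapUp C then G (unUp (mapUp C)) else F (unUp (mapUp C))) = F := by
          funext C
          rw [if_neg (zero_not_mem_mapUp _), unUp_mapUp]
        rw [e, hD]
        rfl
    · intro GG hGG
      apply hnb (fun C => GG (mapUp C))
      funext A
      have h1 : mD x M (fun C => GG (mapUp C)) A = mD (Fin.cons z x) M GG (mapUp A) :=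
        (mD_cons_rho z x GG A).symm
      rw [h1, hGG]
      dsimp only
      rw [if_neg (zero_not_mem_mapUp _), unUp_mapUp]

end NNCMAux7

namespace NNCMAux8
open NNCMAux NNCMAux2 NNCMAux3 NNCMAux4 NNCMAux5 NNCMAux6 NNCM Finset

variable {R : Type*} [CommRing R] {M : Type*} [AddCommGroup M] [Module R M]

def mapC {n : ℕ} (A : Finset (Fin n)) : Finset (Fin (n + 1)) := A.map Fin.castSuccEmb

noncomputable def unC {n : ℕ} (B : Finset (Fin (n + 1))) : Finset (Fin n) :=
  B.preimage Fin.castSucc (Fin.castSucc_injective n).injOn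

lemma mem_unC {n : ℕ} (B : Finset (Fin (n + 1))) (l : Fin n) :
    l ∈ unC B ↔ l.castSucc ∈ B := Finset.mem_preimage

lemma mem_mapC {n : ℕ} (A : Finset (Fin n)) (l : Fin n) :
    l.castSucc ∈ mapC A ↔ l ∈ A := by
  unfold mapC
  exact ⟨fun h => by
    obtain ⟨a, ha, hal⟩ := Finset.mem_map.mp h
    rwa [show a = l from Fin.castSucc_injective n hal] at ha,
    fun h => Finset.mem_map_of_mem _ h⟩

lemma last_not_mem_mapC {n : ℕ} (A : Finset (Fin n)) : Fin.last n ∉ mapC A := by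
  unfold mapC
  intro h
  obtain ⟨a, _, hal⟩ := Finset.mem_map.mp h
  exact absurd hal (Fin.castSucc_lt_last a).ne

lemma unC_mapC {n : ℕ} (A : Finset (Fin n)) : unC (mapC A) = A := by
  ext l
  rw [mem_unC, mem_mapC]

lemma mapC_unC {n : ℕ} (B : Finset (Fin (n + 1))) : mapC (unC B) = B.erase (Fin.last n) := by
  ext a
  cases a using Fin.lastCases with
  | last =>
    simp only [last_not_mem_mapC, false_iff]
    exact fun h => absurd rfl (Finset.mem_erase.mp h).1
  | cast l =>
    rw [mem_mapC, mem_unC, Finset.mem_erase]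
    exact ⟨fun h => ⟨(Fin.castSucc_lt_last l).ne, h⟩, fun h => h.2⟩

lemma mapC_unC_of_not_mem {n : ℕ} {B : Finset (Fin (n + 1))} (h : Fin.last n ∉ B) :
    mapC (unC B) = B := by
  rw [mapC_unC, Finset.erase_eq_of_notMem h]

lemma card_mapC {n : ℕ} (A : Finset (Fin n)) : (mapC A).card = A.card := Finset.card_map _

lemma unC_insert_last {n : ℕ} (B : Finset (Fin (n + 1))) :
    unC (insert (Fin.last n) B) = unC B := by
  ext l
  rw [mem_unC, mem_unC, Finset.mem_insert]
  exact ⟨fun h => h.resolve_left (Fin.castSucc_lt_last l).ne, Or.inr⟩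

lemma mapC_erase {n : ℕ} (A : Finset (Fin n)) (l : Fin n) :
    mapC (A.erase l) = (mapC A).erase l.castSucc := Finset.map_erase _ _ _

lemma castSuccEmb_coe {n : ℕ} : ⇑(Fin.castSuccEmb : Fin n ↪ Fin (n+1)) = Fin.castSucc := rfl

lemma sum_mapC {n : ℕ} {β : Type*} [AddCommMonoid β] (A : Finset (Fin n))
    (f : Fin (n+1) → β) : ∑ b ∈ mapC A, f b = ∑ l ∈ A, f l.castSucc := by
  unfold mapC
  rw [Finset.sum_map]
  simp only [castSuccEmb_coe]

lemma pcnt_castSucc_mapC {n : ℕ} (A : Finset (Fin n)) (l : Fin n) :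
    pcnt l.castSucc (mapC A) = pcnt l A := by
  unfold pcnt mapC
  rw [Finset.filter_map, Finset.card_map]
  congr 1

lemma pcnt_last_insert {n : ℕ} (A : Finset (Fin n)) :
    pcnt (Fin.last n) (insert (Fin.last n) (mapC A)) = A.card := by
  unfold pcnt
  rw [Finset.filter_insert, if_neg (lt_irrefl _),
    Finset.filter_true_of_mem, card_mapC]
  intro a ha
  obtain ⟨l, _, rfl⟩ := Finset.mem_map.mp ha
  exact Fin.castSucc_lt_last l

lemma pcnt_castSucc_insert_last {n : ℕ} (A : Finset (Fin n)) (l : Fin n) :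
    pcnt l.castSucc (insert (Fin.last n) (mapC A)) = pcnt l.castSucc (mapC A) := by
  unfold pcnt
  rw [Finset.filter_insert, if_neg (not_lt_of_gt (Fin.castSucc_lt_last l))]

lemma mD_snoc_rho {n : ℕ} (x : Fin n → R) (z : R) (G : Finset (Fin (n+1)) → M)
    (A : Finset (Fin n)) :
    mD (Fin.snoc x z) M G (mapC A) = mD x M (fun C => G (mapC C)) A := by
  rw [mD_apply, mD_apply, sum_mapC]
  refine Finset.sum_congr rfl fun l hl => ?_
  rw [Fin.snoc_castSucc, ← mapC_erase]
  unfold msgn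
  rw [pcnt_castSucc_mapC]

lemma mD_snoc_pi {n : ℕ} (x : Fin n → R) (z : R) (G : Finset (Fin (n+1)) → M)
    (A : Finset (Fin n)) :
    mD (Fin.snoc x z) M G (insert (Fin.last n) (mapC A))
      = ((-1 : ℤ) ^ A.card) • z • G (mapC A)
        + mD x M (fun C => G (insert (Fin.last n) (mapC C))) A := by
  rw [mD_apply, mD_apply, Finset.sum_insert (last_not_mem_mapC A)]
  have h0 : msgn (Fin.last n) (insert (Fin.last n) (mapC A)) •
      (Fin.snoc x z : Fin (n+1) → R) (Fin.last n) •
      G ((insert (Fin.last n) (mapC A)).erase (Fin.last n))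
      = ((-1 : ℤ) ^ A.card) • z • G (mapC A) := by
    unfold msgn
    rw [pcnt_last_insert, Fin.snoc_last, Finset.erase_insert (last_not_mem_mapC A)]
  rw [h0]
  congr 1
  rw [sum_mapC]
  refine Finset.sum_congr rfl fun l hl => ?_
  rw [Fin.snoc_castSucc,
    Finset.erase_insert_of_ne (Fin.castSucc_lt_last l).ne', ← mapC_erase]
  unfold msgn
  rw [pcnt_castSucc_insert_last, pcnt_castSucc_mapC]

lemma snoc_ext {n : ℕ} {G G' : Finset (Fin (n+1)) → M}
    (h1 : ∀ A : Finset (Fin n), G (mapC A) = G' (mapC A))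
    (h2 : ∀ A : Finset (Fin n), G (insert (Fin.last n) (mapC A)) = G' (insert (Fin.last n) (mapC A))) :
    G = G' := by
  funext B
  by_cases hl : Fin.last n ∈ B
  · have : B = insert (Fin.last n) (mapC (unC B)) := by
      rw [mapC_unC, Finset.insert_erase hl]
    rw [this]
    exact h2 (unC B)
  · have : B = mapC (unC B) := (mapC_unC_of_not_mem hl).symm
    rw [this]
    exact h1 (unC B)

end NNCMAux8

namespace NNCMAux9
open NNCMAux NNCMAux2 NNCMAux3 NNCMAux4 NNCMAux5 NNCMAux6 NNCMAux8 NNCM Finset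

variable {R : Type*} [CommRing R] {M : Type*} [AddCommGroup M] [Module R M]

lemma card_unC_of_not_mem {n : ℕ} {B : Finset (Fin (n+1))} (h : Fin.last n ∉ B) :
    (unC B).card = B.card := by
  rw [← card_mapC, mapC_unC_of_not_mem h]

lemma mH_snoc {n : ℕ} {x : Fin n → R} {z : R} (i : ℕ)
    (h : mH (Fin.snoc x z) M i) : ∃ j, j ≤ i ∧ mH x M j := by
  set w : Fin (n+1) → R := Fin.snoc x z with hw
  cases i with
  | zero =>
    obtain ⟨F, hdeg, hD, hne⟩ := h
    refine ⟨0, le_refl 0, fun C => F (mapC C), ?_, ?_, ?_⟩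
    · intro A hA
      exact hdeg _ (by rw [card_mapC]; exact hA)
    · funext A
      rw [Pi.zero_apply, ← mD_snoc_rho x z F A, hD, Pi.zero_apply]
    · intro h0
      apply hne
      funext B
      by_cases hB : B.card = 0
      · have := congrFun h0 (∅ : Finset (Fin n))
        rw [Pi.zero_apply] at this
        rw [Finset.card_eq_zero.mp hB, Pi.zero_apply, ← this]
        exact (congrArg F (show mapC ∅ = ∅ by unfold mapC; rw [Finset.map_empty])).symm
      · rw [hdeg _ hB]
        rfl
  | succ i =>
    obtain ⟨F, hdeg, hD, hnb⟩ := h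
    set f : Finset (Fin n) → M := fun C => F (mapC C) with hf
    have fdeg : ∀ A : Finset (Fin n), A.card ≠ i + 1 → f A = 0 := by
      intro A hA
      exact hdeg _ (by rw [card_mapC]; exact hA)
    have fD : mD x M f = 0 := by
      funext A
      rw [Pi.zero_apply, hf, ← mD_snoc_rho x z F A, hD, Pi.zero_apply]
    by_cases hex : ∃ g : Finset (Fin n) → M, mD x M g = f
    · obtain ⟨g0, hg0⟩ := hex
      set g : Finset (Fin n) → M := prj i g0 with hg
      have hgD : mD x M g = f := by
        rw [hg, mD_prj, hg0, prj_of_deg fdeg]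
      have gdeg : ∀ A : Finset (Fin n), A.card ≠ i → g A = 0 := by
        intro A hA
        rw [hg]
        unfold prj
        rw [if_neg hA]
      set lg : Finset (Fin (n+1)) → M :=
        fun B => if Fin.last n ∈ B then 0 else g (unC B) with hlg
      have lgdeg : ∀ B : Finset (Fin (n+1)), B.card ≠ i → lg B = 0 := by
        intro B hB
        rw [hlg]
        dsimp only
        by_cases hl : Fin.last n ∈ B
        · rw [if_pos hl]
        · rw [if_neg hl]
          exact gdeg _ (by rw [card_unC_of_not_mem hl]; exact hB)
      have hlg_rho : (fun C => lg (mapC C)) = g := by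
        funext C
        rw [hlg]
        dsimp only
        rw [if_neg (last_not_mem_mapC C), unC_mapC]
      set F' : Finset (Fin (n+1)) → M := F - mD w M lg with hF'
      have hF'D : mD w M F' = 0 := by
        rw [hF', map_sub, hD, mD_mD, sub_zero]
      have hF'rho : ∀ A : Finset (Fin n), F' (mapC A) = 0 := by
        intro A
        rw [hF', Pi.sub_apply, mD_snoc_rho, hlg_rho, hgD]
        exact sub_self (f A)
      set g2 : Finset (Fin n) → M := fun A => F' (insert (Fin.last n) (mapC A)) with hg2
      have hg2D : mD x M g2 = 0 := by
        funext A
        have := congrFun hF'D (insert (Fin.last n) (mapC A))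
        rw [Pi.zero_apply, mD_snoc_pi, hF'rho A, smul_zero, smul_zero, zero_add] at this
        exact this
      have hmdlg : ∀ B : Finset (Fin (n+1)), B.card ≠ i + 1 → mD w M lg B = 0 := by
        intro B hB
        rw [← prj_of_deg lgdeg, mD_prj]
        unfold prj
        rw [if_neg hB]
      have g2deg : ∀ A : Finset (Fin n), A.card ≠ i → g2 A = 0 := by
        intro A hA
        have hcard : (insert (Fin.last n) (mapC A)).card = A.card + 1 := by
          rw [Finset.card_insert_of_notMem (last_not_mem_mapC A), card_mapC]
        have hne : (insert (Fin.last n) (mapC A)).card ≠ i + 1 := by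
          rw [hcard]
          exact fun hc => hA (Nat.succ_injective hc)
        rw [hg2]
        dsimp only
        rw [hF', Pi.sub_apply, hdeg _ hne, hmdlg _ hne, sub_zero]
      by_cases hex2 : ∃ g3 : Finset (Fin n) → M, mD x M g3 = g2
      · exfalso
        obtain ⟨g3, hg3⟩ := hex2
        set lg2 : Finset (Fin (n+1)) → M :=
          fun B => if Fin.last n ∈ B then g3 (unC B) else 0 with hlg2
        have hlg2_rho : (fun C => lg2 (mapC C)) = 0 := by
          funext C
          rw [hlg2]
          dsimp only
          rw [if_neg (last_not_mem_mapC C)]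
          rfl
        have hlg2_pi : (fun C => lg2 (insert (Fin.last n) (mapC C))) = g3 := by
          funext C
          rw [hlg2]
          dsimp only
          rw [if_pos (Finset.mem_insert_self _ _), unC_insert_last, unC_mapC]
        have hFeq : F' = mD w M lg2 := by
          refine snoc_ext (fun A => ?_) (fun A => ?_)
          · rw [hF'rho A, mD_snoc_rho, hlg2_rho, map_zero, Pi.zero_apply]
          · rw [mD_snoc_pi, hlg2_pi, hg3]
            have : lg2 (mapC A) = 0 := by
              rw [hlg2]
              dsimp only
              rw [if_neg (last_not_mem_mapC A)]
            rw [this, smul_zero, smul_zero, zero_add]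
        apply hnb (lg2 + lg)
        rw [map_add, ← hFeq, hF']
        abel
      · refine ⟨i, Nat.le_succ i, ?_⟩
        cases i with
        | zero =>
          refine ⟨g2, g2deg, hg2D, ?_⟩
          intro hg2zero
          exact hex2 ⟨0, by rw [map_zero, hg2zero]⟩
        | succ i' =>
          exact ⟨g2, g2deg, hg2D, fun G hG => hex2 ⟨G, hG⟩⟩
    · exact ⟨i + 1, le_refl _, ⟨f, fdeg, fD, fun G hG => hex ⟨G, hG⟩⟩⟩

end NNCMAux9

namespace NNCMAux10
open NNCMAux NNCMAux2 NNCMAux3 NNCMAux4 NNCMAux5 NNCMAux6 NNCMAux7 NNCMAux8 NNCMAux9 NNCM Finset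

variable {R : Type*} [CommRing R] {M : Type*} [AddCommGroup M] [Module R M]

lemma kgradeSeq_cons_le {n : ℕ} (x : Fin n → R) {z : R}
    (hz : z ∈ Ideal.span (Set.range x)) :
    kgradeSeq (Fin.cons z x) M ≤ kgradeSeq x M := by
  refine le_iInf fun i => le_iInf fun hi => ?_
  have h : koszulHNonzero (Fin.cons z x : Fin (n+1) → R) M i :=
    (mH_iff _ _).mpr (mH_cons hz i ((mH_iff _ _).mp hi))
  exact iInf₂_le i h

lemma le_kgradeSeq_snoc {n : ℕ} (x : Fin n → R) (z : R) :
    kgradeSeq x M ≤ kgradeSeq (Fin.snoc x z) M := by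
  refine le_iInf fun i => le_iInf fun hi => ?_
  obtain ⟨j, hj, hx⟩ := mH_snoc (x := x) (z := z) i ((mH_iff _ _).mp hi)
  exact le_trans (iInf₂_le j ((mH_iff _ _).mpr hx)) (Nat.cast_le.mpr hj)

lemma kgradeSeq_cast {n m : ℕ} (h : n = m) (x : Fin m → R) :
    kgradeSeq (x ∘ Fin.cast h) M = kgradeSeq x M := by
  subst h
  rfl

lemma kgradeSeq_le_append {m n : ℕ} (u : Fin m → R) (v : Fin n → R) :
    kgradeSeq u M ≤ kgradeSeq (Fin.append u v) M := by
  induction n with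
  | zero =>
    have hv : v = Fin.elim0 := funext fun k => k.elim0
    rw [hv, Fin.append_elim0, kgradeSeq_cast]
  | succ n ih =>
    have hv : Fin.append u v = Fin.snoc (Fin.append u (Fin.init v)) (v (Fin.last n)) := by
      conv_lhs => rw [← Fin.snoc_init_self v]
      exact Fin.append_snoc u (Fin.init v) (v (Fin.last n))
    rw [hv]
    exact le_trans (ih (Fin.init v)) (le_kgradeSeq_snoc _ _)

lemma kgradeSeq_append_le {m n : ℕ} (u : Fin m → R) (v : Fin n → R)
    (hu : ∀ k, u k ∈ Ideal.span (Set.range v)) :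
    kgradeSeq (Fin.append u v) M ≤ kgradeSeq v M := by
  induction m with
  | zero =>
    rw [Fin.append_left_nil u v rfl, kgradeSeq_cast]
  | succ m ih =>
    have h1 : Fin.append u v
        = Fin.cons (u 0) (Fin.append (Fin.tail u) v) ∘ Fin.cast (Nat.add_right_comm m 1 n) := by
      conv_lhs => rw [← Fin.cons_self_tail u]
      exact Fin.append_cons (u 0) (Fin.tail u) v
    rw [h1, kgradeSeq_cast]
    have hz : u 0 ∈ Ideal.span (Set.range (Fin.append (Fin.tail u) v)) := by
      refine Ideal.span_mono ?_ (hu 0)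
      rintro r ⟨k, rfl⟩
      exact ⟨Fin.natAdd m k, Fin.append_right (Fin.tail u) v k⟩
    exact le_trans (kgradeSeq_cons_le _ hz) (ih (Fin.tail u) (fun k => hu k.succ))

lemma kgradeSeq_mono_span {m n : ℕ} (u : Fin m → R) (v : Fin n → R)
    (hu : ∀ k, u k ∈ Ideal.span (Set.range v)) :
    kgradeSeq u M ≤ kgradeSeq v M :=
  le_trans (kgradeSeq_le_append u v) (kgradeSeq_append_le u v hu)

end NNCMAux10

namespace NNCMAux11
open NNCMAux10 NNCM

variable {R : Type*} [CommRing R] (S : Type*) [CommRing S] [Algebra R S]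
variable {N : Type*} [AddCommGroup N] [Module S N] [Module R N] [IsScalarTower R S N]

lemma koszulD_algebraMap {m : ℕ} (x : Fin m → R) (i : ℕ) (f : (Fin i ↪o Fin m) → N) :
    koszulD x N i f = koszulD (fun k => algebraMap R S (x k)) N i f := by
  funext s
  show ∑ k : Fin (i + 1), ((-1 : ℤ) ^ (k : ℕ)) • x (s k) • f ((Fin.succAboveOrderEmb k).trans s)
    = ∑ k : Fin (i + 1), ((-1 : ℤ) ^ (k : ℕ)) • algebraMap R S (x (s k)) •
        f ((Fin.succAboveOrderEmb k).trans s)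
  refine Finset.sum_congr rfl fun k _ => ?_
  rw [algebraMap_smul]

lemma koszulHNonzero_algebraMap {m : ℕ} (x : Fin m → R) (i : ℕ) :
    koszulHNonzero x N i ↔ koszulHNonzero (fun k => algebraMap R S (x k)) N i := by
  cases i with
  | zero =>
    show LinearMap.ker (koszulD x N 0) ≠ ⊥ ↔ LinearMap.ker (koszulD _ N 0) ≠ ⊥
    rw [Submodule.ne_bot_iff, Submodule.ne_bot_iff]
    constructor
    · rintro ⟨f, hf, hne⟩
      exact ⟨f, by rw [LinearMap.mem_ker, ← koszulD_algebraMap S x, LinearMap.mem_ker.mp hf], hne⟩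
    · rintro ⟨f, hf, hne⟩
      exact ⟨f, by rw [LinearMap.mem_ker, koszulD_algebraMap S x, LinearMap.mem_ker.mp hf], hne⟩
  | succ i =>
    show ¬ _ ≤ _ ↔ ¬ _ ≤ _
    rw [SetLike.not_le_iff_exists, SetLike.not_le_iff_exists]
    constructor
    · rintro ⟨f, hker, hnr⟩
      refine ⟨f, by rw [LinearMap.mem_ker, ← koszulD_algebraMap S x,
        LinearMap.mem_ker.mp hker], fun hr => hnr ?_⟩
      obtain ⟨g, hg⟩ := hr
      exact ⟨g, by rw [koszulD_algebraMap S x, hg]⟩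
    · rintro ⟨f, hker, hnr⟩
      refine ⟨f, by rw [LinearMap.mem_ker, koszulD_algebraMap S x,
        LinearMap.mem_ker.mp hker], fun hr => hnr ?_⟩
      obtain ⟨g, hg⟩ := hr
      exact ⟨g, by rw [← koszulD_algebraMap S x, hg]⟩

lemma kgradeSeq_algebraMap {m : ℕ} (x : Fin m → R) :
    kgradeSeq x N = kgradeSeq (fun k => algebraMap R S (x k)) N := by
  unfold kgradeSeq
  refine le_antisymm ?_ ?_
  · refine le_iInf fun i => le_iInf fun hi => ?_
    exact iInf₂_le i ((koszulHNonzero_algebraMap S x i).mpr hi)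
  · refine le_iInf fun i => le_iInf fun hi => ?_
    exact iInf₂_le i ((koszulHNonzero_algebraMap S x i).mp hi)

theorem kgrade_eq_kgrade_of_isScalarTower' (a : Ideal R) :
    kgrade a N = kgrade (a.map (algebraMap R S)) N := by
  refine le_antisymm ?_ ?_
  · refine iSup_le fun m => iSup_le fun x => iSup_le fun hx => ?_
    rw [kgradeSeq_algebraMap S x]
    exact le_iSup_of_le m (le_iSup_of_le (fun k => algebraMap R S (x k))
      (le_iSup_of_le (fun k => Ideal.mem_map_of_mem _ (hx k)) le_rfl))
  · refine iSup_le fun m => iSup_le fun y => iSup_le fun hy => ?_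
    classical
    -- each `y k` lies in the span of finitely many elements of the image of `a`
    have hy' : ∀ k, y k ∈ Submodule.span S ((algebraMap R S) '' ↑a) := fun k => hy k
    choose t ht1 ht2 using fun k => Submodule.mem_span_finite_of_mem_span (hy' k)
    set T : Finset S := Finset.univ.biUnion t with hT
    have hT1 : (T : Set S) ⊆ (algebraMap R S) '' ↑a := by
      intro s hs
      obtain ⟨k, _, hk⟩ := Finset.mem_biUnion.mp hs
      exact ht1 k hk
    have hT2 : ∀ k, y k ∈ Submodule.span S (T : Set S) := fun k =>
      Submodule.span_mono (by exact_mod_cast Finset.subset_biUnion_of_mem t (Finset.mem_univ k))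
        (ht2 k)
    set l : List S := T.toList with hl
    set v : Fin l.length → S := fun i => l.get i with hv
    have hrange : Set.range v = (T : Set S) := by
      ext s
      constructor
      · rintro ⟨i, rfl⟩
        exact Finset.mem_toList.mp (l.get_mem i)
      · intro hs
        obtain ⟨i, hi⟩ := List.mem_iff_get.mp (Finset.mem_toList.mpr hs)
        exact ⟨i, hi⟩
    have hva : ∀ i, v i ∈ (algebraMap R S) '' ↑a := fun i =>
      hT1 (by rw [← hrange]; exact ⟨i, rfl⟩)
    choose r hra hre using fun i => hva i
    have hvr : (fun k => algebraMap R S (r k)) = v := funext hre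
    have hspan : ∀ k, y k ∈ Ideal.span (Set.range v) := by
      intro k
      show y k ∈ Submodule.span S (Set.range v)
      rw [hrange]
      exact hT2 k
    calc kgradeSeq y N ≤ kgradeSeq v N := kgradeSeq_mono_span y v hspan
      _ = kgradeSeq r N := by rw [← hvr, ← kgradeSeq_algebraMap]
      _ ≤ kgrade a N := le_iSup_of_le l.length (le_iSup_of_le r
            (le_iSup_of_le (fun k => hra k) le_rfl))

end NNCMAux11

namespace NNCM

/-- change of rings. If `R → S` is a ring homomorphism, `a` an ideal of `R`
and `N` an `S`-module, regarded as an `R`-module by restriction of scalars, then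
`K.grade_R(a, N) = K.grade_S(aS, N)`. -/
theorem kgrade_eq_kgrade_of_isScalarTower
    {R : Type*} [CommRing R] (S : Type*) [CommRing S] [Algebra R S]
    (a : Ideal R) (N : Type*) [AddCommGroup N] [Module S N] [Module R N]
    [IsScalarTower R S N] :
    kgrade a N = kgrade (a.map (algebraMap R S)) N :=
  NNCMAux11.kgrade_eq_kgrade_of_isScalarTower' S a

end NNCM
end

section
/- Let M be a finitely generated module over a commutative ring R. If ht_M(p) = K.grade_{R_p}(p R_p, M_p) for every prime ideal p in Supp_R(M) (the Glaz condition), then ht_M(a) = K.grade_R(a, M) for every finitely generated ideal a of R. -/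
namespace NNCM

section AuxK

variable {S : Type*} [CommRing S] {N : Type*} [AddCommGroup N] [Module S N]

theorem koszulD_apply {n : ℕ} (x : Fin n → S) (i : ℕ) (f : (Fin i ↪o Fin n) → N)
    (s : Fin (i + 1) ↪o Fin n) :
    koszulD x N i f s =
      ∑ k : Fin (i + 1), ((-1 : ℤ) ^ (k : ℕ)) • x (s k) • f ((Fin.succAboveOrderEmb k).trans s) :=
  rfl

/-- Exactness of the Koszul cochain complex in degree `j`. -/
def kex {n : ℕ} (x : Fin n → S) (N : Type*) [AddCommGroup N] [Module S N] : ℕ → Prop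
  | 0 => LinearMap.ker (koszulD x N 0) = ⊥
  | (j + 1) => LinearMap.ker (koszulD x N (j + 1)) ≤ LinearMap.range (koszulD x N j)

theorem koszulHNonzero_iff_not_kex {n : ℕ} (x : Fin n → S) (j : ℕ) :
    koszulHNonzero x N j ↔ ¬ kex x N j := by
  cases j with
  | zero => exact Iff.rfl
  | succ j => exact Iff.rfl

instance subsingleton_emb {n : ℕ} : Subsingleton (Fin 0 ↪o Fin n) :=
  ⟨fun a b => DFunLike.ext a b fun x => x.elim0⟩

/-- The empty order embedding. -/
def emb0 (n : ℕ) : Fin 0 ↪o Fin n :=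
  OrderEmbedding.ofStrictMono Fin.elim0 fun a => a.elim0

/-- The singleton order embedding with value `k`. -/
def emb1 {n : ℕ} (k : Fin n) : Fin 1 ↪o Fin n :=
  OrderEmbedding.ofStrictMono (fun _ => k) fun a b h =>
    absurd (Subsingleton.elim a b) (ne_of_lt h)

@[simp] theorem emb1_apply {n : ℕ} (k : Fin n) (a : Fin 1) : emb1 k a = k := rfl

section Decomp

variable {n q : ℕ}

/-- Push an embedding into `Fin n` up to `Fin (n+1)`. -/
def embUp (t : Fin q ↪o Fin n) : Fin q ↪o Fin (n + 1) := t.trans Fin.castSuccOrderEmb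

@[simp] theorem embUp_apply (t : Fin q ↪o Fin n) (a : Fin q) : embUp t a = (t a).castSucc := rfl

/-- Append the top element `Fin.last n` to an embedding. -/
def embSnoc (t : Fin q ↪o Fin n) : Fin (q + 1) ↪o Fin (n + 1) :=
  OrderEmbedding.ofStrictMono (Fin.snoc (fun a => (t a).castSucc) (Fin.last n)) <| by
    intro a b hab
    rcases Fin.eq_castSucc_or_eq_last b with ⟨b', rfl⟩ | rfl
    · rcases Fin.eq_castSucc_or_eq_last a with ⟨a', rfl⟩ | rfl
      · simp only [Fin.snoc_castSucc]
        exact Fin.castSucc_lt_castSucc_iff.2 (t.strictMono (Fin.castSucc_lt_castSucc_iff.1 hab))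
      · exact absurd hab (Fin.castSucc_lt_last b').asymm
    · rcases Fin.eq_castSucc_or_eq_last a with ⟨a', rfl⟩ | rfl
      · simp only [Fin.snoc_castSucc, Fin.snoc_last]
        exact Fin.castSucc_lt_last _
      · exact absurd hab (lt_irrefl _)

@[simp] theorem embSnoc_castSucc (t : Fin q ↪o Fin n) (a : Fin q) :
    embSnoc t a.castSucc = (t a).castSucc := by
  exact Fin.snoc_castSucc (α := fun _ => Fin (n + 1)) (Fin.last n) (fun a => (t a).castSucc) a

@[simp] theorem embSnoc_last (t : Fin q ↪o Fin n) :
    embSnoc t (Fin.last q) = Fin.last n := by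
  exact Fin.snoc_last (α := fun _ => Fin (n + 1)) (Fin.last n) (fun a => (t a).castSucc)

theorem remove_embUp (t : Fin (q + 1) ↪o Fin n) (j : Fin (q + 1)) :
    (Fin.succAboveOrderEmb j).trans (embUp t) = embUp ((Fin.succAboveOrderEmb j).trans t) :=
  DFunLike.ext _ _ fun _ => rfl

theorem remove_embSnoc_last (t : Fin q ↪o Fin n) :
    (Fin.succAboveOrderEmb (Fin.last q)).trans (embSnoc t) = embUp t := by
  refine DFunLike.ext _ _ fun a => ?_
  show embSnoc t ((Fin.last q).succAbove a) = (t a).castSucc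
  rw [Fin.succAbove_last_apply, embSnoc_castSucc]

theorem remove_embSnoc_castSucc (t : Fin (q + 1) ↪o Fin n) (j : Fin (q + 1)) :
    (Fin.succAboveOrderEmb j.castSucc).trans (embSnoc t) =
      embSnoc ((Fin.succAboveOrderEmb j).trans t) := by
  refine DFunLike.ext _ _ fun a => ?_
  show embSnoc t (j.castSucc.succAbove a) = embSnoc ((Fin.succAboveOrderEmb j).trans t) a
  rcases Fin.eq_castSucc_or_eq_last a with ⟨a', rfl⟩ | rfl
  · rw [Fin.castSucc_succAbove_castSucc, embSnoc_castSucc, embSnoc_castSucc]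
    rfl
  · have h : j.castSucc.succAbove (Fin.last q) = Fin.last (q + 1) := by
      rw [Fin.succAbove_castSucc_of_le j (Fin.last q) (Fin.le_last j), Fin.succ_last]
    rw [h, embSnoc_last, embSnoc_last]

/-- First component of the cone decomposition. -/
def ph1 (F : (Fin q ↪o Fin (n + 1)) → N) : (Fin q ↪o Fin n) → N := fun t => F (embUp t)

/-- Second component of the cone decomposition. -/
def ph2 (F : (Fin (q + 1) ↪o Fin (n + 1)) → N) : (Fin q ↪o Fin n) → N := fun t => F (embSnoc t)

theorem ph1_zero : ph1 (0 : (Fin q ↪o Fin (n + 1)) → N) = 0 := rfl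
theorem ph2_zero : ph2 (0 : (Fin (q + 1) ↪o Fin (n + 1)) → N) = 0 := rfl
theorem ph1_smul (c : S) (F : (Fin q ↪o Fin (n + 1)) → N) : ph1 (c • F) = c • ph1 F := rfl
theorem ph2_smul (c : S) (F : (Fin (q + 1) ↪o Fin (n + 1)) → N) : ph2 (c • F) = c • ph2 F := rfl

theorem ph1_koszulD (x : Fin (n + 1) → S) (F : (Fin q ↪o Fin (n + 1)) → N) :
    ph1 (koszulD x N q F) = koszulD (fun k => x k.castSucc) N q (ph1 F) := by
  funext t
  show koszulD x N q F (embUp t) = _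
  rw [koszulD_apply, koszulD_apply]
  refine Finset.sum_congr rfl fun k _ => ?_
  rw [remove_embUp]
  rfl

theorem ph2_koszulD_succ (x : Fin (n + 1) → S) (F : (Fin (q + 1) ↪o Fin (n + 1)) → N) :
    ph2 (koszulD x N (q + 1) F) =
      koszulD (fun k => x k.castSucc) N q (ph2 F)
        + ((-1 : ℤ) ^ (q + 1)) • x (Fin.last n) • ph1 F := by
  funext t
  show koszulD x N (q + 1) F (embSnoc t) = _
  rw [koszulD_apply, Fin.sum_univ_castSucc]
  simp only [Pi.add_apply, Pi.smul_apply]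
  congr 1
  · rw [koszulD_apply]
    refine Finset.sum_congr rfl fun j _ => ?_
    rw [remove_embSnoc_castSucc, Fin.coe_castSucc, embSnoc_castSucc]
    rfl
  · rw [remove_embSnoc_last, embSnoc_last, Fin.val_last]
    rfl

theorem ph2_koszulD_zero (x : Fin (n + 1) → S) (F : (Fin 0 ↪o Fin (n + 1)) → N) :
    ph2 (koszulD x N 0 F) = x (Fin.last n) • ph1 F := by
  funext t
  show koszulD x N 0 F (embSnoc t) = _
  rw [koszulD_apply, Fin.sum_univ_one]
  have h1 : embSnoc t (0 : Fin 1) = Fin.last n := embSnoc_last t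
  rw [h1]
  simp only [Fin.val_zero, pow_zero, one_smul, Pi.smul_apply]
  congr 1
  exact congrArg F (Subsingleton.elim _ _)

theorem ne_last_of_apply (s : Fin (q + 1) ↪o Fin (n + 1)) (h : ¬ s (Fin.last q) = Fin.last n)
    (a : Fin (q + 1)) : s a ≠ Fin.last n := by
  intro ha
  exact h (le_antisymm (Fin.le_last _) (ha ▸ s.monotone (Fin.le_last a)))

/-- Lower an embedding avoiding the top element. -/
def lowEmb (s : Fin q ↪o Fin (n + 1)) (h : ∀ a, s a ≠ Fin.last n) : Fin q ↪o Fin n :=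
  OrderEmbedding.ofStrictMono (fun a => (s a).castPred (h a)) fun a b hab => by
    rw [Fin.castPred_lt_castPred_iff]
    exact s.strictMono hab

@[simp] theorem lowEmb_apply (s : Fin q ↪o Fin (n + 1)) (h : ∀ a, s a ≠ Fin.last n) (a : Fin q) :
    lowEmb s h a = (s a).castPred (h a) := rfl

theorem embUp_lowEmb (s : Fin q ↪o Fin (n + 1)) (h : ∀ a, s a ≠ Fin.last n) :
    embUp (lowEmb s h) = s :=
  DFunLike.ext _ _ fun a => by simp [Fin.castSucc_castPred]

/-- Chop off the top value of an embedding hitting the top element. -/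
def chopEmb (s : Fin (q + 1) ↪o Fin (n + 1)) (h : s (Fin.last q) = Fin.last n) :
    Fin q ↪o Fin n :=
  lowEmb (Fin.castSuccOrderEmb.trans s) fun a ha => by
    have h2 := s.strictMono (Fin.castSucc_lt_last a)
    rw [h] at h2
    exact absurd ha (ne_of_lt h2)

theorem embSnoc_chopEmb (s : Fin (q + 1) ↪o Fin (n + 1)) (h : s (Fin.last q) = Fin.last n) :
    embSnoc (chopEmb s h) = s := by
  refine DFunLike.ext _ _ fun a => ?_
  rcases Fin.eq_castSucc_or_eq_last a with ⟨a', rfl⟩ | rfl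
  · rw [embSnoc_castSucc]
    simp only [chopEmb, lowEmb_apply]
    rw [Fin.castSucc_castPred]
    rfl
  · rw [embSnoc_last, h]

/-- Reconstruct a cochain from its two components. -/
def mkPair (A : (Fin (q + 1) ↪o Fin n) → N) (B : (Fin q ↪o Fin n) → N) :
    (Fin (q + 1) ↪o Fin (n + 1)) → N := fun s =>
  if h : s (Fin.last q) = Fin.last n then B (chopEmb s h)
  else A (lowEmb s (ne_last_of_apply s h))

/-- Reconstruct a `0`-cochain. -/
def mk0 (A : (Fin 0 ↪o Fin n) → N) : (Fin 0 ↪o Fin (n + 1)) → N := fun _ => A (emb0 n)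

theorem ph1_mkPair (A : (Fin (q + 1) ↪o Fin n) → N) (B : (Fin q ↪o Fin n) → N) :
    ph1 (mkPair A B) = A := by
  funext t
  show mkPair A B (embUp t) = A t
  have h : ¬ embUp t (Fin.last q) = Fin.last n := by
    rw [embUp_apply]
    exact (Fin.castSucc_lt_last _).ne
  rw [mkPair, dif_neg h]
  exact congrArg A (DFunLike.ext _ _ fun a => by
    simp only [lowEmb_apply, embUp_apply, Fin.castPred_castSucc])

theorem ph2_mkPair (A : (Fin (q + 1) ↪o Fin n) → N) (B : (Fin q ↪o Fin n) → N) :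
    ph2 (mkPair A B) = B := by
  funext t
  show mkPair A B (embSnoc t) = B t
  rw [mkPair, dif_pos (embSnoc_last t)]
  congr 1
  refine DFunLike.ext _ _ fun a => ?_
  simp only [chopEmb, lowEmb_apply]
  rw [← Fin.castSucc_inj, Fin.castSucc_castPred]
  exact embSnoc_castSucc t a

theorem ph1_mk0 (A : (Fin 0 ↪o Fin n) → N) : ph1 (mk0 A) = A := by
  funext t
  exact congrArg A (Subsingleton.elim _ _)

theorem eq_of_ph {F G : (Fin (q + 1) ↪o Fin (n + 1)) → N} (h1 : ph1 F = ph1 G)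
    (h2 : ph2 F = ph2 G) : F = G := by
  funext s
  by_cases h : s (Fin.last q) = Fin.last n
  · calc F s = F (embSnoc (chopEmb s h)) := by rw [embSnoc_chopEmb]
    _ = ph2 F (chopEmb s h) := rfl
    _ = ph2 G (chopEmb s h) := by rw [h2]
    _ = G s := by show G _ = G s; rw [embSnoc_chopEmb]
  · have hall := ne_last_of_apply s h
    calc F s = F (embUp (lowEmb s hall)) := by rw [embUp_lowEmb]
    _ = ph1 F (lowEmb s hall) := rfl
    _ = ph1 G (lowEmb s hall) := by rw [h1]
    _ = G s := by show G _ = G s; rw [embUp_lowEmb]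

theorem eq_of_ph0 {F G : (Fin 0 ↪o Fin (n + 1)) → N} (h1 : ph1 F = ph1 G) : F = G := by
  funext s
  calc F s = ph1 F (emb0 n) := congrArg F (Subsingleton.elim _ _)
  _ = ph1 G (emb0 n) := by rw [h1]
  _ = G s := congrArg G (Subsingleton.elim _ _)

end Decomp

theorem koszulD_koszulD {n : ℕ} (x : Fin n → S) (q : ℕ) (F : (Fin q ↪o Fin n) → N) :
    koszulD x N (q + 1) (koszulD x N q F) = 0 := by
  induction n generalizing q with
  | zero => funext s; exact (s 0).elim0
  | succ n ih =>
    have h1 : ph1 (koszulD x N (q + 1) (koszulD x N q F)) = 0 := by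
      rw [ph1_koszulD, ph1_koszulD, ih]
    have h2 : ph2 (koszulD x N (q + 1) (koszulD x N q F)) = 0 := by
      rw [ph2_koszulD_succ, ph1_koszulD]
      cases q with
      | zero =>
        rw [ph2_koszulD_zero, map_smul, pow_one, neg_smul, one_smul]
        exact add_neg_cancel _
      | succ q' =>
        rw [ph2_koszulD_succ, map_add, ih, zero_add, map_zsmul, map_smul]
        rw [show ((-1 : ℤ)) ^ (q' + 1 + 1) = -((-1 : ℤ) ^ (q' + 1)) by ring, neg_zsmul]
        exact add_neg_cancel _
    exact eq_of_ph (h1.trans ph1_zero.symm) (h2.trans ph2_zero.symm)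

theorem kill0 {n : ℕ} (x : Fin n → S) (F : (Fin 0 ↪o Fin n) → N)
    (hF : koszulD x N 0 F = 0) (k : Fin n) : x k • F = 0 := by
  funext s
  have h := congrFun hF (emb1 k)
  rw [koszulD_apply, Fin.sum_univ_one] at h
  simp only [Fin.val_zero, pow_zero, one_smul, emb1_apply, Pi.zero_apply] at h
  calc (x k • F) s = x k • F ((Fin.succAboveOrderEmb (0 : Fin 1)).trans (emb1 k)) := by
        rw [Pi.smul_apply]; exact congrArg _ (congrArg F (Subsingleton.elim _ _))
  _ = 0 := h

theorem cocycle_ph2 {n q : ℕ} (x : Fin (n + 1) → S) (F : (Fin (q + 1) ↪o Fin (n + 1)) → N)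
    (hF : koszulD x N (q + 1) F = 0) :
    koszulD (fun j => x j.castSucc) N q (ph2 F) = ((-1 : ℤ) ^ q) • x (Fin.last n) • ph1 F := by
  have h := congrArg ph2 hF
  rw [ph2_koszulD_succ, ph2_zero] at h
  have h2 := eq_neg_of_add_eq_zero_left h
  rw [h2, ← neg_zsmul]
  congr 1
  rw [pow_succ]
  ring

theorem killSucc : ∀ {n : ℕ} (x : Fin n → S) (k : Fin n) (q : ℕ)
    (F : (Fin (q + 1) ↪o Fin n) → N), koszulD x N (q + 1) F = 0 →
    ∃ (m : ℕ) (G : (Fin q ↪o Fin n) → N), koszulD x N q G = x k ^ m • F := by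
  intro n
  induction n with
  | zero => exact fun x k => k.elim0
  | succ n ih =>
    intro x k q F hF
    have hF1 : koszulD (fun j => x j.castSucc) N (q + 1) (ph1 F) = 0 := by
      rw [← ph1_koszulD, hF]; rfl
    have hco := cocycle_ph2 x F hF
    rcases Fin.eq_castSucc_or_eq_last k with ⟨k', rfl⟩ | rfl
    · -- k = castSucc k'
      cases q with
      | zero =>
        rw [pow_zero, one_smul] at hco
        obtain ⟨m₁, A, hA⟩ := ih (fun j => x j.castSucc) k' 0 (ph1 F) hF1
        have hw : koszulD (fun j => x j.castSucc) N 0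
            (x k'.castSucc ^ m₁ • ph2 F - x (Fin.last n) • A) = 0 := by
          rw [map_sub, map_smul, map_smul, hco, hA]
          rw [smul_comm]
          abel
        have hkill := kill0 (fun j => x j.castSucc)
          (x k'.castSucc ^ m₁ • ph2 F - x (Fin.last n) • A) hw k'
        refine ⟨m₁ + 1, mk0 (x k'.castSucc • A), ?_⟩
        apply eq_of_ph
        · rw [ph1_koszulD, ph1_mk0, map_smul, hA, ph1_smul]
          rw [smul_smul, ← pow_succ']
        · rw [ph2_koszulD_zero, ph1_mk0, ph2_smul]
          have hexp : x (Fin.last n) • x k'.castSucc • A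
              = x k'.castSucc ^ (m₁ + 1) • ph2 F := by
            have h5 := hkill
            rw [smul_sub, sub_eq_zero] at h5
            rw [smul_comm, ← h5, smul_smul, ← pow_succ']
          rw [hexp]
      | succ q' =>
        obtain ⟨m₁, A₁, hA₁⟩ := ih (fun j => x j.castSucc) k' (q' + 1) (ph1 F) hF1
        have hw : koszulD (fun j => x j.castSucc) N (q' + 1)
            (x k'.castSucc ^ m₁ • ph2 F
              - ((-1 : ℤ) ^ (q' + 1)) • x (Fin.last n) • A₁) = 0 := by
          rw [map_sub, map_smul, map_zsmul, map_smul, hco, hA₁]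
          rw [smul_comm (x k'.castSucc ^ m₁) ((-1 : ℤ) ^ (q' + 1)),
            smul_comm (x k'.castSucc ^ m₁) (x (Fin.last n)),
            smul_comm (x (Fin.last n)) (x k'.castSucc ^ m₁)]
          abel
        obtain ⟨m₂, B, hB⟩ := ih (fun j => x j.castSucc) k' q'
          (x k'.castSucc ^ m₁ • ph2 F - ((-1 : ℤ) ^ (q' + 1)) • x (Fin.last n) • A₁) hw
        refine ⟨m₁ + m₂, mkPair (x k'.castSucc ^ m₂ • A₁) B, ?_⟩
        apply eq_of_ph
        · rw [ph1_koszulD, ph1_mkPair, map_smul, hA₁, ph1_smul]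
          rw [smul_smul, ← pow_add, Nat.add_comm m₂ m₁]
        · rw [ph2_koszulD_succ, ph1_mkPair, ph2_mkPair, hB, ph2_smul]
          rw [smul_sub]
          rw [smul_comm (x k'.castSucc ^ m₂) ((-1 : ℤ) ^ (q' + 1)),
            smul_comm (x k'.castSucc ^ m₂) (x (Fin.last n))]
          rw [smul_smul (x k'.castSucc ^ m₂) (x k'.castSucc ^ m₁), ← pow_add,
            Nat.add_comm m₂ m₁]
          abel
    · -- k = last
      cases q with
      | zero =>
        rw [pow_zero, one_smul] at hco
        refine ⟨1, mk0 (ph2 F), ?_⟩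
        apply eq_of_ph
        · rw [ph1_koszulD, ph1_mk0, hco, ph1_smul, pow_one]
        · rw [ph2_koszulD_zero, ph1_mk0, ph2_smul, pow_one]
      | succ q' =>
        refine ⟨1, mkPair (((-1 : ℤ) ^ (q' + 1)) • ph2 F) 0, ?_⟩
        apply eq_of_ph
        · rw [ph1_koszulD, ph1_mkPair, map_zsmul, hco, ph1_smul, pow_one]
          rw [smul_smul, ← pow_add]
          have he : (-1 : ℤ) ^ ((q' + 1) + (q' + 1)) = 1 := by
            rw [← two_mul, pow_mul]
            norm_num
          rw [he, one_smul]
        · rw [ph2_koszulD_succ, ph1_mkPair, ph2_mkPair, map_zero, zero_add, ph2_smul, pow_one]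
          rw [smul_comm (x (Fin.last n)) ((-1 : ℤ) ^ (q' + 1)), smul_smul, ← pow_add]
          have he : (-1 : ℤ) ^ ((q' + 1) + (q' + 1)) = 1 := by
            rw [← two_mul, pow_mul]
            norm_num
          rw [he, one_smul]

end AuxK
section AuxK2

variable {S : Type*} [CommRing S] {N : Type*} [AddCommGroup N] [Module S N]

theorem kex_zero {n : ℕ} {x : Fin n → S} (h : kex x N 0) :
    LinearMap.ker (koszulD x N 0) = ⊥ := h

theorem kex_succ {n : ℕ} {x : Fin n → S} {j : ℕ} (h : kex x N (j + 1)) :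
    LinearMap.ker (koszulD x N (j + 1)) ≤ LinearMap.range (koszulD x N j) := h

theorem koszulD_natural {l : ℕ} (y : Fin l → S) {W W' : Type*} [AddCommGroup W] [Module S W]
    [AddCommGroup W'] [Module S W'] (φ : W →ₗ[S] W') (p : ℕ) (F : (Fin p ↪o Fin l) → W) :
    koszulD y W' p (fun s => φ (F s)) = fun s => φ (koszulD y W p F s) := by
  funext s
  rw [koszulD_apply, koszulD_apply, map_sum]
  refine Finset.sum_congr rfl fun k _ => ?_
  rw [map_zsmul, map_smul]

theorem koszulD_swap {l : ℕ} (y : Fin l → S) {T : Type*} (p : ℕ)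
    (F : (Fin p ↪o Fin l) → T → N) (s : Fin (p + 1) ↪o Fin l) (t : T) :
    koszulD y (T → N) p F s t = koszulD y N p (fun s' => F s' t) s := by
  rw [koszulD_apply, koszulD_apply, Finset.sum_apply]
  refine Finset.sum_congr rfl fun k _ => ?_
  rw [Pi.smul_apply, Pi.smul_apply]

theorem zz {n l : ℕ} (x : Fin n → S) (y : Fin l → S) :
    ∀ (q p : ℕ), (∀ j, j ≤ q → kex x N j) → (∀ j, j ≤ p + q + 1 → kex y N j) →
    ∀ (w : (Fin p ↪o Fin l) → (Fin (q + 1) ↪o Fin n) → N)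
      (u : (Fin (p + 1) ↪o Fin l) → (Fin q ↪o Fin n) → N),
      koszulD y ((Fin (q + 1) ↪o Fin n) → N) p w = (fun s => koszulD x N q (u s)) →
      ∃ h : (Fin p ↪o Fin l) → (Fin q ↪o Fin n) → N,
        koszulD y ((Fin (q + 1) ↪o Fin n) → N) p
          (w - fun s => koszulD x N q (h s)) = 0 := by
  intro q
  induction q with
  | zero =>
    intro p hc hr w u hwu
    have hdd := koszulD_natural y (koszulD x N 0) (p + 1) u
    have hz : koszulD y ((Fin (0 + 1) ↪o Fin n) → N) (p + 1)
        (fun s => koszulD x N 0 (u s)) = 0 := by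
      rw [← hwu]
      exact koszulD_koszulD y p w
    have hu0 : koszulD y ((Fin 0 ↪o Fin n) → N) (p + 1) u = 0 := by
      funext s
      have h1 : koszulD x N 0 (koszulD y ((Fin 0 ↪o Fin n) → N) (p + 1) u s) = 0 :=
        congrFun (hdd.symm.trans hz) s
      have h2 := LinearMap.mem_ker.2 h1
      rw [kex_zero (hc 0 (Nat.zero_le 0)), Submodule.mem_bot] at h2
      exact h2
    have hrow : ∀ t : Fin 0 ↪o Fin n, ∃ K, koszulD y N p K = fun s' => u s' t := by
      intro t
      have hker : koszulD y N (p + 1) (fun s' => u s' t) = 0 := by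
        funext s
        rw [← koszulD_swap, hu0]
        rfl
      obtain ⟨K, hK⟩ := kex_succ (hr (p + 1) (by omega)) (LinearMap.mem_ker.2 hker)
      exact ⟨K, hK⟩
    choose K hK using hrow
    refine ⟨fun s t => K t s, ?_⟩
    have hKu : koszulD y ((Fin 0 ↪o Fin n) → N) p (fun s t => K t s) = u := by
      funext s t
      rw [koszulD_swap]
      exact congrFun (hK t) s
    have hnat := koszulD_natural y (koszulD x N 0) p (fun s t => K t s)
    rw [map_sub, hnat, hKu, ← hwu, sub_self]
  | succ q ihq =>
    intro p hc hr w u hwu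
    have hdd := koszulD_natural y (koszulD x N (q + 1)) (p + 1) u
    have hz : koszulD y ((Fin (q + 1 + 1) ↪o Fin n) → N) (p + 1)
        (fun s => koszulD x N (q + 1) (u s)) = 0 := by
      rw [← hwu]
      exact koszulD_koszulD y p w
    have hv : ∀ s, ∃ v, koszulD x N q v
        = koszulD y ((Fin (q + 1) ↪o Fin n) → N) (p + 1) u s := by
      intro s
      have h1 : koszulD x N (q + 1)
          (koszulD y ((Fin (q + 1) ↪o Fin n) → N) (p + 1) u s) = 0 :=
        congrFun (hdd.symm.trans hz) s
      exact kex_succ (hc (q + 1) (le_refl _)) (LinearMap.mem_ker.2 h1)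
    choose v hv using hv
    obtain ⟨h', hh'⟩ := ihq (p + 1) (fun j hj => hc j (by omega)) (fun j hj => hr j (by omega))
      u v (funext fun s => (hv s).symm)
    set u2 := u - fun s => koszulD x N q (h' s) with hu2
    have hrow : ∀ t, ∃ K, koszulD y N p K = fun s' => u2 s' t := by
      intro t
      have hker : koszulD y N (p + 1) (fun s' => u2 s' t) = 0 := by
        funext s
        rw [← koszulD_swap, hh']
        rfl
      obtain ⟨K, hK⟩ := kex_succ (hr (p + 1) (by omega)) (LinearMap.mem_ker.2 hker)
      exact ⟨K, hK⟩
    choose K hK using hrow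
    refine ⟨fun s t => K t s, ?_⟩
    have hKu : koszulD y ((Fin (q + 1) ↪o Fin n) → N) p (fun s t => K t s) = u2 := by
      funext s t
      rw [koszulD_swap]
      exact congrFun (hK t) s
    have hnat := koszulD_natural y (koszulD x N (q + 1)) p (fun s t => K t s)
    rw [map_sub, hnat, hKu, hwu]
    funext s
    show koszulD x N (q + 1) (u s) - koszulD x N (q + 1) (u2 s) = 0
    rw [← map_sub]
    have h6 : u s - u2 s = koszulD x N q (h' s) := by
      rw [hu2]
      show u s - (u s - koszulD x N q (h' s)) = _
      rw [sub_sub_cancel]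
    rw [h6, koszulD_koszulD]

theorem chase {n l : ℕ} (x : Fin n → S) (y : Fin l → S) (i : ℕ)
    (hc : ∀ j, j ≤ i → kex x N j) (hr : ∀ j, j ≤ i + 1 → kex y N j)
    (f : (Fin (i + 1) ↪o Fin n) → N)
    (hyf : ∀ k : Fin l, ∃ g, koszulD x N i g = y k • f) :
    ∃ h, koszulD x N i h = f := by
  have hu : ∀ s : Fin 1 ↪o Fin l, ∃ g, koszulD x N i g = y (s 0) • f := fun s => hyf (s 0)
  choose u hu using hu
  set w : (Fin 0 ↪o Fin l) → ((Fin (i + 1) ↪o Fin n) → N) := fun _ => f with hwdef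
  have hwu : koszulD y ((Fin (i + 1) ↪o Fin n) → N) 0 w
      = fun s => koszulD x N i (u s) := by
    funext s
    rw [koszulD_apply, Fin.sum_univ_one, hu s]
    simp [hwdef]
  obtain ⟨h, hh⟩ := zz x y i 0 hc (fun j hj => hr j (by omega)) w u hwu
  refine ⟨h (emb0 l), ?_⟩
  funext t
  have h1 : koszulD y N 0
      (fun s' => (w - fun s => koszulD x N i (h s)) s' t) = 0 := by
    funext s
    rw [← koszulD_swap, hh]
    rfl
  have h2 : (fun s' => (w - fun s => koszulD x N i (h s)) s' t) = 0 := by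
    have h3 := LinearMap.mem_ker.2 h1
    rw [kex_zero (hr 0 (Nat.zero_le _)), Submodule.mem_bot] at h3
    exact h3
  have h4 : f t - koszulD x N i (h (emb0 l)) t = 0 := congrFun h2 (emb0 l)
  exact (sub_eq_zero.1 h4).symm

noncomputable instance fintypeOrderEmb {q n : ℕ} : Fintype (Fin q ↪o Fin n) :=
  Fintype.ofInjective (fun s => (s : Fin q → Fin n)) fun a b h => DFunLike.coe_injective h

theorem kgradeSeq_le {n : ℕ} {x : Fin n → S} {j : ℕ} (h : koszulHNonzero x N j) :
    kgradeSeq x N ≤ (j : ℕ∞) := iInf₂_le j h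

theorem le_kgradeSeq {n : ℕ} {x : Fin n → S} {c : ℕ∞}
    (h : ∀ j : ℕ, koszulHNonzero x N j → c ≤ (j : ℕ∞)) : c ≤ kgradeSeq x N := le_iInf₂ h

theorem exists_koszulHNonzero_of_ne_top {n : ℕ} {x : Fin n → S} (h : kgradeSeq x N ≠ ⊤) :
    ∃ j, koszulHNonzero x N j := by
  by_contra hno
  push_neg at hno
  exact h (top_unique (le_kgradeSeq fun j hj => absurd hj (hno j)))

theorem kgradeSeq_le_kgrade {a : Ideal S} {m : ℕ} {x : Fin m → S} (hx : ∀ k, x k ∈ a) :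
    kgradeSeq x N ≤ kgrade a N :=
  le_iSup_of_le m <| le_iSup_of_le x <| le_iSup_of_le hx le_rfl

theorem kgrade_le {a : Ideal S} {c : ℕ∞}
    (h : ∀ (m : ℕ) (x : Fin m → S), (∀ k, x k ∈ a) → kgradeSeq x N ≤ c) :
    kgrade a N ≤ c :=
  iSup_le fun m => iSup_le fun x => iSup_le fun hx => h m x hx

end AuxK2
section AuxLoc

variable {R : Type*} [CommRing R] {M : Type*} [AddCommGroup M] [Module R M]
variable (σ : Submonoid R)

/-- Componentwise localization of a cochain. -/
noncomputable def lC {T : Type*} (f : T → M) : T → LocalizedModule σ M :=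
  fun t => LocalizedModule.mkLinearMap σ M (f t)

theorem lC_smul {T : Type*} (c : R) (f : T → M) : lC σ (c • f) = c • lC σ f := by
  funext t
  show LocalizedModule.mkLinearMap σ M (c • f t) = _
  rw [map_smul]
  rfl

theorem lC_sub {T : Type*} (a b : T → M) : lC σ (a - b) = lC σ a - lC σ b := by
  funext t
  show LocalizedModule.mkLinearMap σ M (a t - b t) = _
  rw [map_sub]
  rfl

theorem lC_zero {T : Type*} : lC σ (0 : T → M) = 0 := by
  funext t
  show LocalizedModule.mkLinearMap σ M 0 = 0
  rw [map_zero]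

theorem lC_koszulD {n : ℕ} (x : Fin n → R) (q : ℕ) (f : (Fin q ↪o Fin n) → M) :
    lC σ (koszulD x M q f)
      = koszulD (fun k => algebraMap R (Localization σ) (x k)) (LocalizedModule σ M) q
          (lC σ f) := by
  funext s
  show LocalizedModule.mkLinearMap σ M (koszulD x M q f s) = _
  rw [koszulD_apply, koszulD_apply, map_sum]
  refine Finset.sum_congr rfl fun k _ => ?_
  rw [map_zsmul, map_smul, algebraMap_smul]
  rfl

theorem lC_clear {T : Type*} [Fintype T] (G : T → LocalizedModule σ M) :
    ∃ (g : T → M) (t : σ), (t : R) • G = lC σ g := by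
  classical
  have hmk : ∀ s : T, ∃ mt : M × σ, G s = LocalizedModule.mk mt.1 mt.2 := by
    intro s
    have hz : ∀ z : LocalizedModule σ M, ∃ mt : M × σ, z = LocalizedModule.mk mt.1 mt.2 := by
      intro z
      induction z using LocalizedModule.induction_on with
      | _ m t => exact ⟨(m, t), rfl⟩
    exact hz (G s)
  choose mt hmt using hmk
  refine ⟨fun s => (∏ s' ∈ Finset.univ.erase s, ((mt s').2 : R)) • (mt s).1,
    ∏ s', (mt s').2, ?_⟩
  funext s
  rw [Pi.smul_apply, hmt s]
  have hsplit : ((∏ s', (mt s').2 : σ) : R)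
      = ((mt s).2 : R) * ∏ s' ∈ Finset.univ.erase s, ((mt s').2 : R) := by
    rw [SubmonoidClass.coe_finset_prod]
    rw [← Finset.mul_prod_erase Finset.univ (fun s' => ((mt s').2 : R)) (Finset.mem_univ s)]
  rw [hsplit, mul_smul, LocalizedModule.smul'_mk, LocalizedModule.smul'_mk,
    ← Submonoid.smul_def, LocalizedModule.mk_cancel]
  rfl

theorem lC_eq_zero {T : Type*} [Fintype T] {g : T → M} (h : lC σ g = 0) :
    ∃ u : σ, (u : R) • g = 0 := by
  classical
  have hu : ∀ s : T, ∃ u : σ, (u : R) • g s = 0 := by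
    intro s
    have h1 : LocalizedModule.mk (g s) (1 : σ) = LocalizedModule.mk (0 : M) (1 : σ) := by
      have h0 := congrFun h s
      show _ = _
      rw [LocalizedModule.zero_mk]
      exact h0
    rw [LocalizedModule.mk_eq] at h1
    obtain ⟨u, hu⟩ := h1
    refine ⟨u, ?_⟩
    have : u • (1 : σ) • g s = u • (1 : σ) • (0 : M) := hu
    simpa [Submonoid.smul_def] using this
  choose u hu using hu
  refine ⟨∏ s', u s', ?_⟩
  funext s
  rw [Pi.smul_apply]
  have hsplit : ((∏ s', u s' : σ) : R)
      = (∏ s' ∈ Finset.univ.erase s, ((u s') : R)) * (u s : R) := by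
    rw [SubmonoidClass.coe_finset_prod]
    rw [← Finset.prod_erase_mul Finset.univ (fun s' => ((u s') : R)) (Finset.mem_univ s)]
  rw [hsplit, mul_smul, hu s, smul_zero]
  rfl

variable {V : Type*} [AddCommGroup V] [Module (Localization σ) V] [Module R V]
  [IsScalarTower R (Localization σ) V]

theorem unit_smul_cancel {c : R} (hc : IsUnit (algebraMap R (Localization σ) c))
    {z w : V} (h : c • z = c • w) : z = w := by
  have h2 : hc.unit • z = hc.unit • w := by
    rw [Units.smul_def, Units.smul_def, IsUnit.unit_spec, algebraMap_smul, algebraMap_smul]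
    exact h
  exact MulAction.injective hc.unit h2

theorem unit_smul_solve {c : R} (hc : IsUnit (algebraMap R (Localization σ) c))
    {z w : V} (h : c • z = w) :
    z = (↑hc.unit⁻¹ : Localization σ) • w := by
  have h2 : (↑hc.unit : Localization σ) • z = w := by
    rw [IsUnit.unit_spec, algebraMap_smul]
    exact h
  rw [← h2, smul_smul, Units.inv_mul, one_smul]

theorem kex_localize {n : ℕ} (x : Fin n → R) (j : ℕ) (hj : kex x M j) :
    kex (fun k => algebraMap R (Localization σ) (x k)) (LocalizedModule σ M) j := by
  cases j with
  | zero =>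
    show LinearMap.ker
      (koszulD (fun k => algebraMap R (Localization σ) (x k)) (LocalizedModule σ M) 0) = ⊥
    rw [Submodule.eq_bot_iff]
    intro F hF
    obtain ⟨g, t, hgt⟩ := lC_clear σ F
    have h1 : lC σ (koszulD x M 0 g) = 0 := by
      rw [lC_koszulD, ← hgt, LinearMap.map_smul_of_tower, LinearMap.mem_ker.1 hF, smul_zero]
    obtain ⟨u, hu⟩ := lC_eq_zero σ h1
    have h2 : koszulD x M 0 ((u : R) • g) = 0 := by rw [map_smul, hu]
    have h3 : (u : R) • g = 0 := by
      have h4 := LinearMap.mem_ker.2 h2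
      rw [kex_zero hj, Submodule.mem_bot] at h4
      exact h4
    have h4 : ((u : R) * (t : R)) • F = 0 := by
      rw [mul_smul, hgt, ← lC_smul, h3, lC_zero]
    have hunit : IsUnit (algebraMap R (Localization σ) ((u : R) * (t : R))) := by
      rw [map_mul]
      exact (IsLocalization.map_units (Localization σ) u).mul
        (IsLocalization.map_units (Localization σ) t)
    have h5 := unit_smul_cancel σ hunit (z := F) (w := 0) (by rw [h4, smul_zero])
    exact h5
  | succ j =>
    intro F hF
    obtain ⟨g, t, hgt⟩ := lC_clear σ F
    have h1 : lC σ (koszulD x M (j + 1) g) = 0 := by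
      rw [lC_koszulD, ← hgt, LinearMap.map_smul_of_tower, LinearMap.mem_ker.1 hF, smul_zero]
    obtain ⟨u, hu⟩ := lC_eq_zero σ h1
    have h2 : (u : R) • g ∈ LinearMap.ker (koszulD x M (j + 1)) :=
      LinearMap.mem_ker.2 (by rw [map_smul, hu])
    obtain ⟨h, hh⟩ := kex_succ hj h2
    have h3 : ((u : R) * (t : R)) • F
        = koszulD (fun k => algebraMap R (Localization σ) (x k)) (LocalizedModule σ M) j
            (lC σ h) := by
      rw [mul_smul, hgt, ← lC_smul, ← hh, lC_koszulD]
    have hunit : IsUnit (algebraMap R (Localization σ) ((u : R) * (t : R))) := by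
      rw [map_mul]
      exact (IsLocalization.map_units (Localization σ) u).mul
        (IsLocalization.map_units (Localization σ) t)
    have h4 := unit_smul_solve σ hunit h3
    refine LinearMap.mem_range.2 ⟨(↑hunit.unit⁻¹ : Localization σ) • lC σ h, ?_⟩
    rw [map_smul, ← h4]

end AuxLoc

section AuxMisc

theorem multiexp {A H' : Type*} [CommRing A] [AddCommGroup H'] [Module A H'] :
    ∀ {l : ℕ} (y : Fin l → A) (ξ : H'), ξ ≠ 0 → (∀ k, ∃ m : ℕ, y k ^ m • ξ = 0) →
    ∃ c : A, c • ξ ≠ 0 ∧ ∀ k, y k • c • ξ = 0 := by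
  intro l
  induction l with
  | zero =>
    intro y ξ hξ _
    exact ⟨1, by simpa using hξ, fun k => k.elim0⟩
  | succ l ih =>
    intro y ξ hξ hpow
    have hex : ∃ m : ℕ, y 0 ^ m • ξ = 0 := hpow 0
    classical
    have hfind := Nat.find_spec hex
    have hne : Nat.find hex ≠ 0 := by
      intro h0
      rw [h0, pow_zero, one_smul] at hfind
      exact hξ hfind
    have he1 : (Nat.find hex - 1) + 1 = Nat.find hex := by omega
    set e := Nat.find hex - 1 with he
    have hξ1 : y 0 ^ e • ξ ≠ 0 := Nat.find_min hex (by omega)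
    have hy0 : y 0 • y 0 ^ e • ξ = 0 := by
      rw [smul_smul, ← pow_succ', he1]
      exact hfind
    obtain ⟨c', hc1, hc2⟩ := ih (fun k => y k.succ) (y 0 ^ e • ξ) hξ1 (by
      intro k
      obtain ⟨m, hm⟩ := hpow k.succ
      exact ⟨m, by rw [smul_comm, hm, smul_zero]⟩)
    refine ⟨c' * y 0 ^ e, ?_, ?_⟩
    · rw [mul_smul]; exact hc1
    · intro k
      induction k using Fin.cases with
      | zero =>
        rw [mul_smul, smul_comm (y 0) c', hy0, smul_zero]
      | succ k' =>
        rw [mul_smul]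
        exact hc2 k'

theorem le_radical_map {R : Type*} [CommRing R] {I p : Ideal R} [hp' : p.IsPrime]
    (hp : p ∈ I.minimalPrimes) :
    Ideal.map (algebraMap R (Localization.AtPrime p)) p ≤
      (Ideal.map (algebraMap R (Localization.AtPrime p)) I).radical := by
  rw [Ideal.radical_eq_sInf]
  refine le_sInf ?_
  rintro Q ⟨hIQ, hQp⟩
  have hq1 : I ≤ Ideal.comap (algebraMap R (Localization.AtPrime p)) Q :=
    Ideal.map_le_iff_le_comap.1 hIQ
  have hq2 : Ideal.comap (algebraMap R (Localization.AtPrime p)) Q ≤ p := by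
    intro r hr
    by_contra hrp
    have hunit : IsUnit (algebraMap R (Localization.AtPrime p) r) :=
      IsLocalization.map_units (Localization.AtPrime p) (⟨r, hrp⟩ : p.primeCompl)
    exact hQp.ne_top (Q.eq_top_of_isUnit_mem hr hunit)
  haveI := hQp
  have hcomapprime : (Ideal.comap (algebraMap R (Localization.AtPrime p)) Q).IsPrime :=
    Ideal.IsPrime.comap _
  have hle : p ≤ Ideal.comap (algebraMap R (Localization.AtPrime p)) Q :=
    hp.2 ⟨hcomapprime, hq1⟩ hq2
  rw [Ideal.map_le_iff_le_comap]
  exact hle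

end AuxMisc
section KeyPrime

variable {R : Type*} [CommRing R] {M : Type*} [AddCommGroup M] [Module R M]

/-- The ideal of elements `c` with `c • f ∈ B`. -/
def modTor {C : Type*} [AddCommGroup C] [Module R C] (B : Submodule R C) (f : C) : Ideal R :=
  Submodule.comap (LinearMap.toSpanSingleton R C f) B

theorem mem_modTor {C : Type*} [AddCommGroup C] [Module R C] {B : Submodule R C} {f : C}
    {c : R} : c ∈ modTor B f ↔ c • f ∈ B := by
  simp [modTor, LinearMap.toSpanSingleton_apply]

theorem key_prime {n : ℕ} (x : Fin n → R) (i0 : ℕ)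
    (hmin : ∀ j, j < i0 → kex x M j) (hi0 : koszulHNonzero x M i0) :
    ∃ (p : PrimeSpectrum R), (∀ k, x k ∈ p.asIdeal) ∧ p ∈ Module.support R M ∧
      kgrade (p.asIdeal.map (algebraMap R (Localization.AtPrime p.asIdeal)))
        (LocalizedModule p.asIdeal.primeCompl M) ≤ (i0 : ℕ∞) := by
  classical
  cases i0 with
  | zero =>
    -- hi0 : ker ≠ ⊥ ; pick a nonzero element of the kernel
    obtain ⟨f, hf1, hf2⟩ := Submodule.exists_mem_ne_zero_of_ne_bot hi0
    have hIne : modTor (⊥ : Submodule R ((Fin 0 ↪o Fin n) → M)) f ≠ ⊤ := by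
      rw [Ideal.ne_top_iff_one]
      intro h1
      rw [mem_modTor, one_smul, Submodule.mem_bot] at h1
      exact hf2 h1
    obtain ⟨Mx, hMx, hIMx⟩ := Ideal.exists_le_maximal _ hIne
    haveI := hMx.isPrime
    obtain ⟨p, hpmin, -⟩ := Ideal.exists_minimalPrimes_le hIMx
    haveI hpprime : p.IsPrime := hpmin.1.1
    have hIp : modTor (⊥ : Submodule R ((Fin 0 ↪o Fin n) → M)) f ≤ p := hpmin.1.2
    have hxp : ∀ k, x k ∈ p := by
      intro k
      refine hIp (mem_modTor.2 ?_)
      rw [Submodule.mem_bot]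
      exact kill0 x f hf1 k
    have hf'ne : lC p.primeCompl f ≠ 0 := by
      intro h0
      obtain ⟨u, hu⟩ := lC_eq_zero p.primeCompl h0
      have h2 : (u : R) ∈ p := hIp (mem_modTor.2 (by rw [Submodule.mem_bot]; exact hu))
      exact u.2 h2
    refine ⟨⟨p, hpprime⟩, hxp, ?_, ?_⟩
    · rw [Module.mem_support_iff]
      have hex : ∃ t0, lC p.primeCompl f t0 ≠ 0 := by
        by_contra hall
        push_neg at hall
        exact hf'ne (funext hall)
      obtain ⟨t0, ht0⟩ := hex
      exact nontrivial_of_ne _ _ ht0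
    · refine kgrade_le fun l y hy => ?_
      have hpow : ∀ k, ∃ m : ℕ, y k ^ m • lC p.primeCompl f = 0 := by
        intro k
        obtain ⟨m, hm⟩ := le_radical_map hpmin (hy k)
        refine ⟨m, ?_⟩
        have hII' : Ideal.map (algebraMap R (Localization.AtPrime p))
            (modTor (⊥ : Submodule R ((Fin 0 ↪o Fin n) → M)) f)
            ≤ modTor (⊥ : Submodule _ _) (lC p.primeCompl f) := by
          rw [Ideal.map_le_iff_le_comap]
          intro c hc
          rw [Ideal.mem_comap, mem_modTor, Submodule.mem_bot, algebraMap_smul, ← lC_smul]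
          rw [mem_modTor, Submodule.mem_bot] at hc
          rw [hc, lC_zero]
        have := hII' hm
        rw [mem_modTor, Submodule.mem_bot] at this
        exact this
      obtain ⟨c, hc1, hc2⟩ := multiexp y (lC p.primeCompl f) hf'ne hpow
      have hker : (fun _ : Fin 0 ↪o Fin l => (c • lC p.primeCompl f) (emb0 n)) ∈
          LinearMap.ker (koszulD y (LocalizedModule p.primeCompl M) 0) := by
        refine LinearMap.mem_ker.2 ?_
        funext s
        rw [koszulD_apply, Fin.sum_univ_one]
        simp only [Fin.val_zero, pow_zero, one_smul, Pi.zero_apply]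
        exact congrFun (hc2 (s 0)) (emb0 n)
      have hne2 : (fun _ : Fin 0 ↪o Fin l => (c • lC p.primeCompl f) (emb0 n)) ≠ 0 := by
        intro h0
        apply hc1
        funext t
        calc (c • lC p.primeCompl f) t = (c • lC p.primeCompl f) (emb0 n) :=
              congrArg _ (Subsingleton.elim _ _)
        _ = 0 := congrFun h0 (emb0 l)
      have hnz : LinearMap.ker (koszulD y (LocalizedModule p.primeCompl M) 0) ≠ ⊥ := by
        intro hbot
        rw [Submodule.eq_bot_iff] at hbot
        exact hne2 (hbot _ hker)
      exact kgradeSeq_le (x := y) (j := 0) hnz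
  | succ j0 =>
    rw [koszulHNonzero_iff_not_kex] at hi0
    have hex : ∃ f, f ∈ LinearMap.ker (koszulD x M (j0 + 1))
        ∧ f ∉ LinearMap.range (koszulD x M j0) := by
      by_contra hno
      push_neg at hno
      exact hi0 fun f hf => hno f hf
    obtain ⟨f, hf1, hf2⟩ := hex
    have hIne : modTor (LinearMap.range (koszulD x M j0)) f ≠ ⊤ := by
      rw [Ideal.ne_top_iff_one]
      intro h1
      rw [mem_modTor, one_smul] at h1
      exact hf2 h1
    obtain ⟨Mx, hMx, hIMx⟩ := Ideal.exists_le_maximal _ hIne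
    haveI := hMx.isPrime
    obtain ⟨p, hpmin, -⟩ := Ideal.exists_minimalPrimes_le hIMx
    haveI hpprime : p.IsPrime := hpmin.1.1
    have hIp : modTor (LinearMap.range (koszulD x M j0)) f ≤ p := hpmin.1.2
    have hxp : ∀ k, x k ∈ p := by
      intro k
      obtain ⟨mm, G, hG⟩ := killSucc x k j0 f (LinearMap.mem_ker.1 hf1)
      have hpm : x k ^ mm ∈ p := hIp (mem_modTor.2 ⟨G, hG⟩)
      exact hpprime.mem_of_pow_mem mm hpm
    -- the localized cocycle is not a coboundary
    have hf'B : lC p.primeCompl f ∉ LinearMap.range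
        (koszulD (fun k => algebraMap R (Localization.AtPrime p) (x k))
          (LocalizedModule p.primeCompl M) j0) := by
      rintro ⟨G, hG⟩
      obtain ⟨g, t, hgt⟩ := lC_clear p.primeCompl G
      have h1 : lC p.primeCompl ((t : R) • f - koszulD x M j0 g) = 0 := by
        rw [lC_sub, lC_smul, lC_koszulD, ← hgt, ← hG, LinearMap.map_smul_of_tower]
        exact sub_self _
      obtain ⟨u, hu⟩ := lC_eq_zero p.primeCompl h1
      have h3 := hu
      rw [smul_sub, sub_eq_zero] at h3
      have h2 : ((u : R) * (t : R)) • f ∈ LinearMap.range (koszulD x M j0) := by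
        refine ⟨(u : R) • g, ?_⟩
        rw [map_smul, ← h3, ← mul_smul]
      have h4 : (u : R) * (t : R) ∈ p := hIp (mem_modTor.2 h2)
      exact Submonoid.mul_mem _ u.2 t.2 h4
    have hf'ne : lC p.primeCompl f ≠ 0 := fun h0 => hf'B (h0 ▸ Submodule.zero_mem _)
    refine ⟨⟨p, hpprime⟩, hxp, ?_, ?_⟩
    · rw [Module.mem_support_iff]
      have hex2 : ∃ t0, lC p.primeCompl f t0 ≠ 0 := by
        by_contra hall
        push_neg at hall
        exact hf'ne (funext hall)
      obtain ⟨t0, ht0⟩ := hex2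
      exact nontrivial_of_ne _ _ ht0
    · refine kgrade_le fun l y hy => ?_
      by_contra hcon
      have hkex : ∀ jj, jj ≤ j0 + 1 →
          kex y (LocalizedModule p.primeCompl M) jj := by
        intro jj hjj
        by_contra hk
        refine hcon (le_trans (kgradeSeq_le ((koszulHNonzero_iff_not_kex _ _).2 hk)) ?_)
        exact_mod_cast Nat.cast_le.2 hjj
      have hξ : (Submodule.Quotient.mk (lC p.primeCompl f) :
          _ ⧸ LinearMap.range (koszulD (fun k => algebraMap R (Localization.AtPrime p) (x k))
            (LocalizedModule p.primeCompl M) j0)) ≠ 0 := by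
        rw [Ne, Submodule.Quotient.mk_eq_zero]
        exact hf'B
      have hpow : ∀ k, ∃ m : ℕ, y k ^ m • (Submodule.Quotient.mk (lC p.primeCompl f) :
          _ ⧸ LinearMap.range (koszulD (fun k => algebraMap R (Localization.AtPrime p) (x k))
            (LocalizedModule p.primeCompl M) j0)) = 0 := by
        intro k
        obtain ⟨m, hm⟩ := le_radical_map hpmin (hy k)
        refine ⟨m, ?_⟩
        have hII' : Ideal.map (algebraMap R (Localization.AtPrime p))
            (modTor (LinearMap.range (koszulD x M j0)) f)
            ≤ modTor (LinearMap.range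
                (koszulD (fun k => algebraMap R (Localization.AtPrime p) (x k))
                  (LocalizedModule p.primeCompl M) j0)) (lC p.primeCompl f) := by
          rw [Ideal.map_le_iff_le_comap]
          intro c hc
          rw [Ideal.mem_comap, mem_modTor, algebraMap_smul, ← lC_smul]
          rw [mem_modTor] at hc
          obtain ⟨g, hg⟩ := hc
          refine ⟨lC p.primeCompl g, ?_⟩
          rw [← lC_koszulD, hg]
        have hmem := hII' hm
        rw [mem_modTor] at hmem
        rw [← Submodule.Quotient.mk_smul, Submodule.Quotient.mk_eq_zero]
        exact hmem
      obtain ⟨c, hc1, hc2⟩ := multiexp y _ hξ hpow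
      have hf₂B : c • lC p.primeCompl f ∉ LinearMap.range
          (koszulD (fun k => algebraMap R (Localization.AtPrime p) (x k))
            (LocalizedModule p.primeCompl M) j0) := by
        intro hmem
        apply hc1
        rw [← Submodule.Quotient.mk_smul, Submodule.Quotient.mk_eq_zero]
        exact hmem
      have hyf : ∀ k, ∃ g, koszulD (fun k => algebraMap R (Localization.AtPrime p) (x k))
          (LocalizedModule p.primeCompl M) j0 g = y k • c • lC p.primeCompl f := by
        intro k
        have h7 := hc2 k
        rw [← Submodule.Quotient.mk_smul, ← Submodule.Quotient.mk_smul,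
          Submodule.Quotient.mk_eq_zero] at h7
        exact h7
      have hcols : ∀ jj, jj ≤ j0 →
          kex (fun k => algebraMap R (Localization.AtPrime p) (x k))
            (LocalizedModule p.primeCompl M) jj := fun jj hjj =>
        kex_localize p.primeCompl x jj (hmin jj (by omega))
      obtain ⟨h, hh⟩ := chase (fun k => algebraMap R (Localization.AtPrime p) (x k)) y j0
        hcols hkex (c • lC p.primeCompl f) hyf
      exact hf₂B ⟨h, hh⟩

end KeyPrime
/-- Let `M` be a finitely generated module over a commutative ring `R`.
If `ht_M(p) = K.grade_{R_p}(p R_p, M_p)` for every prime `p ∈ Supp M` (the Glaz condition),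
then `ht_M(a) = K.grade_R(a, M)` for every finitely generated ideal `a` of `R`. -/
theorem cm_fg_of_glaz {R : Type*} [CommRing R]
    (M : Type*) [AddCommGroup M] [Module R M] [Module.Finite R M]
    (hGlaz : ∀ p : PrimeSpectrum R, p ∈ Module.support R M →
      htMod p.asIdeal M =
        (kgrade (p.asIdeal.map (algebraMap R (Localization.AtPrime p.asIdeal)))
          (LocalizedModule p.asIdeal.primeCompl M) : WithBot ℕ∞)) :
    ∀ a : Ideal R, a.FG → htMod a M = (kgrade a M : WithBot ℕ∞) := by
  intro a hfg
  refine le_antisymm ?_ ?_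
  · -- hard direction : htMod a M ≤ kgrade a M
    by_cases hg : kgrade a M = ⊤
    · rw [hg]
      have htop : ((⊤ : ℕ∞) : WithBot ℕ∞) = ⊤ := rfl
      rw [htop]
      exact le_top
    · obtain ⟨m, xs, hspan⟩ := Submodule.fg_iff_exists_fin_generating_family.1 hfg
      have hx : ∀ k, xs k ∈ a := fun k => by
        rw [← hspan]
        exact Submodule.subset_span (Set.mem_range_self k)
      have hseq : kgradeSeq xs M ≤ kgrade a M := kgradeSeq_le_kgrade hx
      have hne : kgradeSeq xs M ≠ ⊤ := fun h => hg (top_unique (h ▸ hseq))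
      obtain ⟨j, hj⟩ := exists_koszulHNonzero_of_ne_top hne
      classical
      have hexnz : ∃ j, koszulHNonzero xs M j := ⟨j, hj⟩
      have hi0 : koszulHNonzero xs M (Nat.find hexnz) := Nat.find_spec hexnz
      have hmin : ∀ jj, jj < Nat.find hexnz → kex xs M jj := by
        intro jj hjj
        have h2 := Nat.find_min hexnz hjj
        by_contra hk
        exact h2 ((koszulHNonzero_iff_not_kex _ _).2 hk)
      have hi0le : ((Nat.find hexnz : ℕ) : ℕ∞) ≤ kgrade a M := by
        refine le_trans (le_kgradeSeq fun jj hjj => ?_) hseq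
        exact_mod_cast Nat.cast_le.2 (Nat.find_min' hexnz hjj)
      obtain ⟨p, hxp, hsupp, hloc⟩ := key_prime xs (Nat.find hexnz) hmin hi0
      have hap : a ≤ p.asIdeal := by
        rw [← hspan, Submodule.span_le]
        rintro r ⟨k, rfl⟩
        exact hxp k
      have h1 : htMod a M ≤ htMod p.asIdeal M := by
        refine le_iInf fun q => le_iInf fun hq => le_iInf fun hqs => ?_
        exact iInf_le_of_le q (iInf_le_of_le (le_trans hap hq) (iInf_le _ hqs))
      calc htMod a M ≤ htMod p.asIdeal M := h1
      _ = _ := hGlaz p hsupp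
      _ ≤ (kgrade a M : WithBot ℕ∞) := WithBot.coe_le_coe.2 (le_trans hloc hi0le)
  · -- easy direction : kgrade a M ≤ htMod a M
    refine le_iInf fun p => le_iInf fun hap => le_iInf fun hsupp => ?_
    have h1 : kgrade a M ≤ kgrade (p.asIdeal.map (algebraMap R (Localization.AtPrime p.asIdeal)))
        (LocalizedModule p.asIdeal.primeCompl M) := by
      refine kgrade_le fun m xseq hx => ?_
      refine le_trans (le_kgradeSeq fun j hj => ?_)
        (kgradeSeq_le_kgrade
          (x := fun k => algebraMap R (Localization.AtPrime p.asIdeal) (xseq k))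
          (fun k => Ideal.mem_map_of_mem _ (hap (hx k))))
      have hnk : ¬ kex xseq M j := fun hk =>
        (koszulHNonzero_iff_not_kex _ _).1 hj (kex_localize p.asIdeal.primeCompl xseq j hk)
      exact kgradeSeq_le ((koszulHNonzero_iff_not_kex _ _).2 hnk)
    calc (kgrade a M : WithBot ℕ∞)
        ≤ (kgrade (p.asIdeal.map (algebraMap R (Localization.AtPrime p.asIdeal)))
            (LocalizedModule p.asIdeal.primeCompl M) : WithBot ℕ∞) := WithBot.coe_le_coe.2 h1
      _ = htMod p.asIdeal M := (hGlaz p hsupp).symm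
      _ ≤ dimLoc M p := iInf_le_of_le p (iInf_le_of_le le_rfl (iInf_le _ hsupp))

end NNCM
end

section
/- Let R be a commutative ring that is Cohen-Macaulay in the sense of ideals. Then wAss_R(R) = Min(R), i.e. the weakly associated primes of R (as a module over itself) are exactly the minimal prime ideals of R. -/
namespace NNCM

section Aux

variable {R : Type*} [CommRing R]

/-- If `p` is minimal over `I` and `x ∈ p`, then some multiple `s * x ^ n` with `s ∉ p`
lies in `I`. -/
private lemma exists_mul_pow_mem {I p : Ideal R} (hp : p ∈ I.minimalPrimes) {x : R}
    (hx : x ∈ p) : ∃ s ∉ p, ∃ n : ℕ, s * x ^ n ∈ I := by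
  by_contra h
  push_neg at h
  have hprime : p.IsPrime := hp.1.1
  have h1p : (1 : R) ∉ p := (Ideal.ne_top_iff_one p).mp hprime.ne_top
  set T : Submonoid R :=
    { carrier := {r | ∃ s ∉ p, ∃ n : ℕ, s * x ^ n = r}
      one_mem' := ⟨1, h1p, 0, by ring⟩
      mul_mem' := by
        rintro a b ⟨s, hs, n, rfl⟩ ⟨t, ht, m, rfl⟩
        exact ⟨s * t, fun hst => ((hprime.mul_mem_iff_mem_or_mem.mp hst).elim hs ht),
          n + m, by ring⟩ } with hT
  have hdisj : Disjoint (I : Set R) (T : Set R) := by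
    rw [Set.disjoint_left]
    rintro r hrI ⟨s, hs, n, rfl⟩
    exact h s hs n hrI
  obtain ⟨q, hq, hIq, hqT⟩ := Ideal.exists_le_prime_disjoint I T hdisj
  have hqp : q ≤ p := by
    intro y hy
    by_contra hyp
    exact Set.disjoint_left.mp hqT hy ⟨y, hyp, 0, by ring⟩
  have hpq : p ≤ q := hp.2 ⟨hq, hIq⟩ hqp
  exact Set.disjoint_left.mp hqT (hpq hx) ⟨1, h1p, 1, by ring⟩

/-- If each `x k` kills `r` up to a power, then some multiple of `r` is nonzero and killed
by each `x k`. -/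
private lemma exists_mul_ann : ∀ (n : ℕ) (x : Fin n → R) (r : R), r ≠ 0 →
    (∀ k, ∃ N : ℕ, x k ^ N * r = 0) →
    ∃ c : R, c * r ≠ 0 ∧ ∀ k, x k * (c * r) = 0 := by
  intro n
  induction n with
  | zero => exact fun x r hr _ => ⟨1, by simpa using hr, fun k => k.elim0⟩
  | succ n ih =>
    intro x r hr h
    classical
    have hex : ∃ j, x 0 ^ j * r = 0 := h 0
    have hj : x 0 ^ Nat.find hex * r = 0 := Nat.find_spec hex
    have hj0 : Nat.find hex ≠ 0 := by
      intro h0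
      apply hr
      simpa [h0] using hj
    have hlt : Nat.find hex - 1 < Nat.find hex := Nat.sub_lt (Nat.pos_of_ne_zero hj0) one_pos
    have hr1 : x 0 ^ (Nat.find hex - 1) * r ≠ 0 := Nat.find_min hex hlt
    have hsucc : Nat.find hex - 1 + 1 = Nat.find hex := Nat.succ_pred_eq_of_pos
      (Nat.pos_of_ne_zero hj0)
    have hx0r1 : x 0 * (x 0 ^ (Nat.find hex - 1) * r) = 0 := by
      rw [← hsucc] at hj
      linear_combination hj
    obtain ⟨c, hc1, hc2⟩ := ih (fun k => x k.succ) (x 0 ^ (Nat.find hex - 1) * r) hr1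
      (fun k => by
        obtain ⟨N, hN⟩ := h k.succ
        exact ⟨N, by linear_combination x 0 ^ (Nat.find hex - 1) * hN⟩)
    refine ⟨c * x 0 ^ (Nat.find hex - 1), by rwa [mul_assoc], fun k => ?_⟩
    refine Fin.cases ?_ (fun k => ?_) k
    · linear_combination c * hx0r1
    · linear_combination hc2 k

/-- If `p` is a weakly associated prime of `R` and all entries of `x` lie in `p`, then
some nonzero element of `R` is killed by every `x k`. -/
private lemma exists_ann_of_wAss {p : Ideal R} {m : R}
    (hp : p ∈ (Ideal.torsionOf R R m).minimalPrimes) {n : ℕ} {x : Fin n → R}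
    (hx : ∀ k, x k ∈ p) : ∃ r : R, r ≠ 0 ∧ ∀ k, x k * r = 0 := by
  classical
  choose s hs N hsN using fun k => exists_mul_pow_mem hp (hx k)
  have hprime : p.IsPrime := hp.1.1
  set S : R := ∏ k, s k with hSdef
  have hSp : S ∉ p := fun hSp => by
    haveI := hprime
    obtain ⟨k, _, hk⟩ := Ideal.IsPrime.prod_mem_iff.mp hSp
    exact hs k hk
  have hSm : S * m ≠ 0 := by
    intro h0
    exact hSp (hp.1.2 ((Ideal.mem_torsionOf_iff m S).mpr (by simpa [smul_eq_mul] using h0)))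
  obtain ⟨c, hc1, hc2⟩ := exists_mul_ann n x (S * m) hSm (fun k => by
    refine ⟨N k, ?_⟩
    have hk : (s k * x k ^ N k) * m = 0 := by
      simpa [smul_eq_mul] using (Ideal.mem_torsionOf_iff m _).mp (hsN k)
    have hS : S = s k * ∏ j ∈ Finset.univ.erase k, s j :=
      (Finset.mul_prod_erase Finset.univ s (Finset.mem_univ k)).symm
    rw [hS]
    linear_combination (∏ j ∈ Finset.univ.erase k, s j) * hk)
  exact ⟨c * (S * m), hc1, hc2⟩

end Aux

/-- If `R` is Cohen-Macaulay in the sense of ideals, then the weakly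
associated primes of `R` (as a module over itself) are exactly the minimal primes of `R`. -/
theorem wAss_eq_minimalPrimes {R : Type*} [CommRing R] (hR : CMIdeals R) :
    wAss R R = minimalPrimes R := by
  apply Set.eq_of_subset_of_subset
  · rintro p ⟨m, hp⟩
    have hprime : p.IsPrime := hp.1.1
    -- Step 1: the Koszul grade of `p` on `R` is zero.
    have hgrade : kgrade p R = 0 := by
      apply le_antisymm _ zero_le
      refine iSup_le fun n => iSup_le fun x => iSup_le fun hx => ?_
      obtain ⟨r, hr0, hr⟩ := exists_ann_of_wAss hp hx
      have hP0 : koszulHNonzero x R 0 := by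
        show LinearMap.ker (koszulD x R 0) ≠ ⊥
        intro hker
        have hmem : (fun _ => r : (Fin 0 ↪o Fin n) → R) ∈ LinearMap.ker (koszulD x R 0) := by
          rw [LinearMap.mem_ker]
          funext t
          show (∑ k : Fin 1, ((-1 : ℤ) ^ (k : ℕ)) • x (t k) •
            (fun _ => r : (Fin 0 ↪o Fin n) → R) ((Fin.succAboveOrderEmb k).trans t)) = 0
          rw [Fin.sum_univ_one]
          simp [smul_eq_mul, hr (t 0)]
        rw [hker, Submodule.mem_bot] at hmem
        exact hr0 (congrFun hmem ((Fin.castLEOrderEmb (Nat.zero_le n))))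
      calc kgradeSeq x R ≤ ((0 : ℕ) : ℕ∞) := iInf₂_le 0 hP0
        _ = 0 := rfl
    -- Step 2: Cohen-Macaulayness gives `ht p = 0`, so some minimal prime contains `p`.
    have hht : htIdeal p = 0 := (hR p).trans hgrade
    obtain ⟨q, hpq, hq0⟩ : ∃ q : PrimeSpectrum R, p ≤ q.asIdeal ∧ Order.height q = 0 := by
      by_contra hq
      push_neg at hq
      have : (1 : ℕ∞) ≤ htIdeal p :=
        le_iInf fun q => le_iInf fun hq' => ENat.one_le_iff_ne_zero.mpr (hq q hq')
      rw [hht] at this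
      exact (by norm_num : ¬ ((1 : ℕ∞) ≤ 0)) this
    have hmin : IsMin q := Order.height_eq_zero.mp hq0
    have hpq' : (⟨p, hprime⟩ : PrimeSpectrum R) = q :=
      le_antisymm hpq (hmin hpq)
    have hminp : IsMin (⟨p, hprime⟩ : PrimeSpectrum R) := hpq' ▸ hmin
    refine ⟨⟨hprime, bot_le⟩, fun {J} hJ hJp => ?_⟩
    exact hminp (show (⟨J, hJ.1⟩ : PrimeSpectrum R) ≤ ⟨p, hprime⟩ from hJp)
  · intro p hp
    refine ⟨1, ?_⟩
    have : Ideal.torsionOf R R 1 = ⊥ := by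
      ext r
      simp [Ideal.mem_torsionOf_iff, smul_eq_mul]
    rw [this]
    exact hp

end NNCM
end

section
/- Let R be a commutative ring and G a finite group of ring automorphisms of R such that the order of G is a unit in R, and let R^G = { x ∈ R : σ(x) = x for all σ ∈ G } be the ring of invariants. Then for every prime ideal q of R, ht(q) = ht(q ∩ R^G). -/
namespace NNCM

section Aux
variable {G R : Type*} [Group G] [Finite G] [CommRing R] [MulSemiringAction G R]

theorem fixed_isIntegral (x : R) : IsIntegral (fixedSubring G R) x := by
  cases nonempty_fintype G
  refine ⟨(prodXSubSMul G R x).toSubring (fixedSubring G R) ?_, ?_, ?_⟩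
  case refine_1 =>
    intro c hc
    obtain ⟨n, _, hn⟩ := Polynomial.mem_coeffs_iff.1 hc
    intro g
    rw [hn]
    exact prodXSubSMul.coeff G R x g n
  · exact (Polynomial.monic_toSubring _ _ _).2 (prodXSubSMul.monic G R x)
  · rw [← Polynomial.eval_map]
    show Polynomial.eval x (Polynomial.map (fixedSubring G R).subtype _) = 0
    convert prodXSubSMul.eval G R x using 2
    exact Polynomial.map_toSubring _ _ _

instance : Algebra.IsIntegral (fixedSubring G R) R := ⟨fixed_isIntegral⟩

/-- The norm element. -/
theorem norm_mem_fixed [Fintype G] (x : R) : (∏ g : G, g • x : R) ∈ fixedSubring G R := by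
  intro g'
  rw [show (g' • ∏ g : G, g • x) = ∏ g : G, (g' * g) • x by
    rw [Finset.smul_prod']; exact Finset.prod_congr rfl fun g _ => (mul_smul g' g x).symm]
  exact Equiv.prod_comp (Equiv.mulLeft g') (fun g : G => g • x)

theorem comap_smul_strict {P Q : Ideal R} [P.IsPrime] (h : P < Q) :
    P.comap (fixedSubring G R).subtype < Q.comap (fixedSubring G R).subtype := by
  obtain ⟨hle, x, hxQ, hxP⟩ := SetLike.lt_iff_le_and_exists.mp h
  exact Ideal.comap_lt_comap_of_integral_mem_sdiff (R := fixedSubring G R) hle ⟨hxQ, hxP⟩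
    (fixed_isIntegral x)


theorem norm_mem_ideal [Fintype G] {q : Ideal R} {x : R} (hx : x ∈ q) :
    (∏ g : G, g • x : R) ∈ q := by
  classical
  rw [← Finset.prod_erase_mul _ _ (Finset.mem_univ (1 : G))]
  exact q.mul_mem_left _ (by simpa using hx)

/-- Primes with the same contraction to the fixed subring are in the same `G`-orbit. -/
theorem exists_comap_smul_eq (P Q : Ideal R) [P.IsPrime] [Q.IsPrime]
    (h : P.comap (fixedSubring G R).subtype = Q.comap (fixedSubring G R).subtype) :
    ∃ g : G, P.comap (MulSemiringAction.toRingHom G R g) = Q := by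
  cases nonempty_fintype G
  classical
  have hsub : (Q : Set R) ⊆ ⋃ g ∈ (Finset.univ : Finset G),
      ((P.comap (MulSemiringAction.toRingHom G R g) : Ideal R) : Set R) := by
    intro x hx
    have hN : (∏ g : G, g • x : R) ∈ P := by
      have : (⟨∏ g : G, g • x, norm_mem_fixed x⟩ : fixedSubring G R)
          ∈ Q.comap (fixedSubring G R).subtype := norm_mem_ideal hx
      rw [← h] at this
      exact this
    obtain ⟨g, -, hg⟩ := (Ideal.IsPrime.prod_mem_iff).1 hN
    exact Set.mem_biUnion (Finset.mem_univ g) hg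
  obtain ⟨g, -, hg⟩ := (Ideal.subset_union_prime 1 1 fun i _ _ _ =>
    Ideal.comap_isPrime _ P).1 hsub
  refine ⟨g, le_antisymm ?_ hg⟩
  by_contra hlt
  have h1 : Q < P.comap (MulSemiringAction.toRingHom G R g) :=
    lt_of_le_of_ne hg (fun e => hlt (le_of_eq e.symm))
  have h2 := comap_smul_strict (G := G) h1
  rw [Ideal.comap_comap] at h2
  have h3 : (MulSemiringAction.toRingHom G R g).comp (fixedSubring G R).subtype
      = (fixedSubring G R).subtype := RingHom.ext fun a => a.2 g
  rw [h3, h, lt_self_iff_false] at h2; exact h2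

/-- Going down for the fixed subring. -/
theorem going_down {p' : Ideal (fixedSubring G R)} {Q : Ideal R} [p'.IsPrime] [Q.IsPrime]
    (h : p' < Q.comap (fixedSubring G R).subtype) :
    ∃ P : Ideal R, P.IsPrime ∧ P < Q ∧ P.comap (fixedSubring G R).subtype = p' := by
  have halg : algebraMap ↥(fixedSubring G R) R = (fixedSubring G R).subtype := rfl
  obtain ⟨P₀, -, hP₀prime, hP₀⟩ := Ideal.exists_ideal_over_prime_of_isIntegral
    (R := ↥(fixedSubring G R)) (S := R) p' ⊥ (by
      rw [← RingHom.ker_eq_comap_bot, halg,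
        (RingHom.injective_iff_ker_eq_bot _).1 Subtype.coe_injective]
      exact bot_le)
  rw [halg] at hP₀
  obtain ⟨Q', hQ'ge, hQ'prime, hQ'⟩ := Ideal.exists_ideal_over_prime_of_isIntegral
    (R := ↥(fixedSubring G R)) (S := R) (Q.comap (fixedSubring G R).subtype) P₀
    (by rw [halg]; exact hP₀.le.trans h.le)
  rw [halg] at hQ'
  obtain ⟨g, hg⟩ := exists_comap_smul_eq (R := R) Q' Q hQ'
  have hcomp : (MulSemiringAction.toRingHom G R g).comp (fixedSubring G R).subtype
      = (fixedSubring G R).subtype := RingHom.ext fun a => a.2 g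
  refine ⟨P₀.comap (MulSemiringAction.toRingHom G R g), Ideal.comap_isPrime _ _, ?_, ?_⟩
  · refine lt_of_le_of_ne (hg ▸ Ideal.comap_mono hQ'ge) fun e => ?_
    have h2 : P₀.comap ((MulSemiringAction.toRingHom G R g).comp
        (fixedSubring G R).subtype) = Q.comap (fixedSubring G R).subtype := by
      rw [← Ideal.comap_comap, e]
    rw [hcomp, hP₀] at h2
    exact h.ne h2
  · rw [Ideal.comap_comap, hcomp, hP₀]


/-- The comap map on prime spectra. -/
def cmap (p : PrimeSpectrum R) : PrimeSpectrum (fixedSubring G R) :=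
  ⟨p.asIdeal.comap (fixedSubring G R).subtype, Ideal.comap_isPrime _ _⟩

theorem cmap_strictMono : StrictMono (cmap (G := G) (R := R)) := fun p p' h => by
  rw [← PrimeSpectrum.asIdeal_lt_asIdeal]
  exact comap_smul_strict (G := G) ((PrimeSpectrum.asIdeal_lt_asIdeal _ _).2 h)

theorem exists_ltSeries_lift (n : ℕ) :
    ∀ (ℓ : LTSeries (PrimeSpectrum (fixedSubring G R))) (Q : PrimeSpectrum R),
      ℓ.length = n → ℓ.last = cmap Q →
      ∃ L : LTSeries (PrimeSpectrum R), L.length = n ∧ L.last = Q := by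
  induction n with
  | zero => exact fun ℓ Q _ _ => ⟨RelSeries.singleton _ Q, rfl, RelSeries.last_singleton Q⟩
  | succ n ih =>
    intro ℓ Q hn hlast
    have hlt : ℓ.eraseLast.last < cmap Q := by
      rw [← hlast]; exact ℓ.eraseLast_last_rel_last (by omega)
    obtain ⟨P, hPprime, hPQ, hPcomap⟩ :=
      going_down (Q := Q.asIdeal) ((PrimeSpectrum.asIdeal_lt_asIdeal _ _).2 hlt)
    obtain ⟨L', hL'len, hL'last⟩ := ih ℓ.eraseLast ⟨P, hPprime⟩
      (by simp [hn]) (PrimeSpectrum.ext hPcomap.symm)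
    refine ⟨L'.snoc Q (by rw [hL'last]; exact (PrimeSpectrum.asIdeal_lt_asIdeal _ _).1 hPQ),
      by simp [hL'len], RelSeries.last_snoc _ _ _⟩

theorem htIdeal_of_prime {R' : Type*} [CommRing R'] (p : PrimeSpectrum R') :
    htIdeal p.asIdeal = Order.height p := by
  refine le_antisymm (iInf₂_le p le_rfl) (le_iInf₂ fun p' h => Order.height_mono ?_)
  exact (PrimeSpectrum.asIdeal_le_asIdeal _ _).1 h

theorem height_cmap (q : PrimeSpectrum R) :
    Order.height q = Order.height (cmap (G := G) q) := by
  refine le_antisymm (Order.height_le_height_apply_of_strictMono _ cmap_strictMono q) ?_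
  refine Order.height_le fun ℓ hlast => ?_
  obtain ⟨L, hLlen, hLlast⟩ := exists_ltSeries_lift ℓ.length ℓ q rfl hlast
  rw [← hLlen, ← hLlast]
  exact Order.length_le_height_last

end Aux

/-- Let `R` be a commutative ring and `G` a finite group of ring automorphisms
of `R` whose order is a unit in `R`. Then for every prime ideal `q` of `R`,
`ht q = ht (q ∩ R^G)`. -/
theorem height_eq_height_comap_fixedSubring {G R : Type*} [Group G] [Finite G]
    [CommRing R] [MulSemiringAction G R] (hG : IsUnit ((Nat.card G : ℕ) : R))
    (q : PrimeSpectrum R) :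
    htIdeal q.asIdeal = htIdeal (q.asIdeal.comap (fixedSubring G R).subtype) := by
  rw [htIdeal_of_prime q,
    show q.asIdeal.comap (fixedSubring G R).subtype = (cmap (G := G) q).asIdeal from rfl,
    htIdeal_of_prime]
  exact height_cmap q

end NNCM
end
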